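/- arXiv:1610.02381 — 7 statements merged into one kernel-verified Lean document; each statement's English description precedes it below -/
import Mathlib

section
/- Let A and B be subsets of the space c of convergent real sequences (with the sup norm), both satisfying the integer-distance-free property, and let f : A → B be a bijection. If (1) ⌊f(x)_i⌋ = ⌊x_i⌋ for every x ∈ A and every index i, and (2) for all x, y ∈ A and every index i, {f(x)_i} < {f(y)_i} if and only if {x_i} < {y_i}, then f is a step-isometry: for all x, y ∈ A, ⌊‖x - y‖⌋ = ⌊‖f(x) - f(y)‖⌋. -/
open Filter Topology Set

/-- The sup-norm distance between two real sequences. -/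
noncomputable def supDist (x y : ℕ → ℝ) : ℝ := ⨆ n, |x n - y n|

/-- Membership in the space `c` of convergent real sequences. -/
def InC (x : ℕ → ℝ) : Prop := ∃ l, Tendsto x atTop (nhds l)

/-- A subset of `c` is integer-distance-free: no coordinate or limit of a point is an
integer, and no coordinate-wise or limit difference of two distinct points is an integer. -/
def IDFSet (A : Set (ℕ → ℝ)) : Prop :=
  (∀ x ∈ A, ∀ n, ∀ k : ℤ, x n ≠ (k : ℝ)) ∧
  (∀ x ∈ A, ∀ l : ℝ, Tendsto x atTop (nhds l) → ∀ k : ℤ, l ≠ (k : ℝ)) ∧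
  (∀ x ∈ A, ∀ y ∈ A, x ≠ y → ∀ n, ∀ k : ℤ, x n - y n ≠ (k : ℝ)) ∧
  (∀ x ∈ A, ∀ y ∈ A, x ≠ y → ∀ lx ly : ℝ, Tendsto x atTop (nhds lx) →
    Tendsto y atTop (nhds ly) → ∀ k : ℤ, lx - ly ≠ (k : ℝ))


lemma floor_sub_eq {a b a' b' : ℝ}
    (hfa : ⌊a'⌋ = ⌊a⌋) (hfb : ⌊b'⌋ = ⌊b⌋)
    (hlt : Int.fract a' < Int.fract b' ↔ Int.fract a < Int.fract b)
    (hgt : Int.fract b' < Int.fract a' ↔ Int.fract b < Int.fract a)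
    (hne : ∀ k : ℤ, a - b ≠ k) :
    ⌊a' - b'⌋ = ⌊a - b⌋ := by
  have key : ∀ c d : ℝ, Int.fract c ≠ Int.fract d →
      ⌊c - d⌋ = if Int.fract c < Int.fract d then ⌊c⌋ - ⌊d⌋ - 1 else ⌊c⌋ - ⌊d⌋ := by
    intro c d hcd'
    have h1 : c - d = (⌊c⌋ : ℝ) - ⌊d⌋ + (Int.fract c - Int.fract d) := by
      unfold Int.fract; ring
    by_cases h : Int.fract c < Int.fract d
    · rw [if_pos h, Int.floor_eq_iff]
      constructor
      · push_cast
        linarith [Int.fract_nonneg c, Int.fract_lt_one d]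
      · push_cast
        linarith [Int.fract_nonneg c, Int.fract_lt_one d]
    · have h' : Int.fract d < Int.fract c := lt_of_le_of_ne (not_lt.1 h) (Ne.symm hcd')
      rw [if_neg h, Int.floor_eq_iff]
      constructor
      · push_cast; linarith
      · push_cast; linarith [Int.fract_lt_one c, Int.fract_nonneg d]

  have hab : Int.fract a ≠ Int.fract b := by
    intro h
    apply hne (⌊a⌋ - ⌊b⌋)
    have ha := Int.fract_add_floor a
    have hb := Int.fract_add_floor b
    push_cast
    linarith
  have hab' : Int.fract a' ≠ Int.fract b' := by
    intro h
    rcases lt_or_gt_of_ne hab with hc | hc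
    · exact absurd (hlt.2 hc) (by simp [h])
    · exact absurd (hgt.2 hc) (by simp [h])
  rw [key a b hab, key a' b' hab', hfa, hfb]
  rcases lt_or_gt_of_ne hab with hc | hc
  · rw [if_pos hc, if_pos (hlt.2 hc)]
  · rw [if_neg (not_lt.2 hc.le), if_neg (not_lt.2 (hgt.2 hc).le)]

-- floor of |a| from floor of a, for non-integer a
lemma floor_abs_eq {a b : ℝ} (ha : ∀ k : ℤ, a ≠ k) (hb : ∀ k : ℤ, b ≠ k)
    (h : ⌊a⌋ = ⌊b⌋) : ⌊|a|⌋ = ⌊|b|⌋ := by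
  have key : ∀ c : ℝ, (∀ k : ℤ, c ≠ k) → ⌊|c|⌋ = if 0 ≤ ⌊c⌋ then ⌊c⌋ else -⌊c⌋ - 1 := by
    intro c hc
    have h1 : (⌊c⌋ : ℝ) < c := lt_of_le_of_ne (Int.floor_le c) (fun h => hc ⌊c⌋ h.symm)
    have h2 : c < ⌊c⌋ + 1 := Int.lt_floor_add_one c
    by_cases h0 : 0 ≤ ⌊c⌋
    · rw [if_pos h0]
      have : 0 < c := lt_of_le_of_lt (by exact_mod_cast h0) h1
      rw [abs_of_pos this]
    · rw [if_neg h0]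
      have hcneg : c < 0 := by
        have : (⌊c⌋ : ℝ) + 1 ≤ 0 := by exact_mod_cast (by omega : ⌊c⌋ + 1 ≤ 0)
        linarith
      rw [abs_of_neg hcneg, Int.floor_eq_iff]
      constructor
      · push_cast; linarith
      · push_cast; linarith
  rw [key a ha, key b hb, h]

-- sup of convergent sequence: attained or equals limit
lemma sup_attained_or_limit {u : ℕ → ℝ} {l : ℝ} (h : Tendsto u atTop (nhds l)) :
    (∃ n, u n = ⨆ n, u n) ∨ (⨆ n, u n) = l := by
  have hbdd : BddAbove (Set.range u) := h.bddAbove_range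
  set S := ⨆ n, u n with hS
  have hle : ∀ n, u n ≤ S := fun n => le_ciSup hbdd n
  have hlS : l ≤ S := le_of_tendsto h (Eventually.of_forall hle)
  rcases eq_or_lt_of_le hlS with heq | hlt
  · exact Or.inr heq.symm
  · left
    have hev : ∀ᶠ n in atTop, u n < (S + l) / 2 := by
      have : Set.Iio ((S + l) / 2) ∈ nhds l := Iio_mem_nhds (by linarith)
      exact h.eventually_mem this
    obtain ⟨N, hN⟩ := hev.exists_forall_of_atTop
    have hne : (Finset.range (N + 1)).Nonempty := ⟨0, by simp⟩
    set c := (Finset.range (N + 1)).sup' hne u with hc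
    have hSc : S ≤ max c ((S + l) / 2) := by
      apply ciSup_le
      intro n
      by_cases hn : n ≤ N
      · exact le_max_of_le_left (Finset.le_sup' u (by simp; omega))
      · exact le_max_of_le_right (hN n (by omega)).le
    have hSc' : S ≤ c := by
      rcases max_cases c ((S + l) / 2) with ⟨h1, _⟩ | ⟨h1, _⟩
      · rwa [h1] at hSc
      · rw [h1] at hSc; linarith
    obtain ⟨n, _, hn⟩ := Finset.exists_mem_eq_sup' hne u
    exact ⟨n, le_antisymm (hle n) (hn ▸ hSc' : S ≤ u n)⟩

-- floor of sup: attained as floor of some term, and bounds all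
lemma floor_ciSup_spec {u : ℕ → ℝ} (hbdd : BddAbove (Set.range u))
    (hS : ∀ k : ℤ, (⨆ n, u n) ≠ k) :
    (∃ n, ⌊u n⌋ = ⌊⨆ n, u n⌋) ∧ ∀ n, ⌊u n⌋ ≤ ⌊⨆ n, u n⌋ := by
  set S := ⨆ n, u n with hSdef
  have hub : ∀ n, ⌊u n⌋ ≤ ⌊S⌋ := fun n => Int.floor_le_floor (le_ciSup hbdd n)
  refine ⟨?_, hub⟩
  have hlt : (⌊S⌋ : ℝ) < S := lt_of_le_of_ne (Int.floor_le S) (fun h => hS ⌊S⌋ h.symm)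
  obtain ⟨n, hn⟩ := exists_lt_of_lt_ciSup hlt
  exact ⟨n, le_antisymm (hub n) (Int.le_floor.2 hn.le)⟩

lemma abs_not_int {t : ℝ} (h : ∀ k : ℤ, t ≠ k) : ∀ k : ℤ, |t| ≠ k := by
  intro k hk
  rcases abs_choice t with h1 | h1
  · exact h k (h1 ▸ hk)
  · exact h (-k) (by push_cast; linarith [h1 ▸ hk])

/-- a bijection between i.d.f. subsets of `c` preserving the floors of
coordinates and the relative order of fractional parts of coordinates is a step-isometry. -/
theorem step_isometry_of_floor_and_fract_order
    (A B : Set (ℕ → ℝ)) (hA : ∀ x ∈ A, InC x) (hB : ∀ x ∈ B, InC x)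
    (hAidf : IDFSet A) (hBidf : IDFSet B)
    (f : (ℕ → ℝ) → (ℕ → ℝ)) (hf : Set.BijOn f A B)
    (h1 : ∀ x ∈ A, ∀ i, ⌊f x i⌋ = ⌊x i⌋)
    (h2 : ∀ x ∈ A, ∀ y ∈ A, ∀ i,
      Int.fract (f x i) < Int.fract (f y i) ↔ Int.fract (x i) < Int.fract (y i)) :
    ∀ x ∈ A, ∀ y ∈ A, ⌊supDist x y⌋ = ⌊supDist (f x) (f y)⌋ := by
  intro x hx y hy
  by_cases hxy : x = y
  · subst hxy
    simp [supDist, sub_self, abs_zero, ciSup_const]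
  · have hfx : f x ∈ B := hf.mapsTo hx
    have hfy : f y ∈ B := hf.mapsTo hy
    have hfxy : f x ≠ f y := fun h => hxy (hf.injOn hx hy h)
    obtain ⟨lx, hlx⟩ := hA x hx
    obtain ⟨ly, hly⟩ := hA y hy
    obtain ⟨lfx, hlfx⟩ := hB _ hfx
    obtain ⟨lfy, hlfy⟩ := hB _ hfy
    set u : ℕ → ℝ := fun n => |x n - y n| with hu
    set v : ℕ → ℝ := fun n => |f x n - f y n| with hv
    -- coordinate differences are not integers
    have hdni : ∀ n, ∀ k : ℤ, x n - y n ≠ k := fun n => hAidf.2.2.1 x hx y hy hxy n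
    have heni : ∀ n, ∀ k : ℤ, f x n - f y n ≠ k :=
      fun n => hBidf.2.2.1 _ hfx _ hfy hfxy n
    -- coordinate-wise floors of differences agree
    have hm : ∀ n, ⌊f x n - f y n⌋ = ⌊x n - y n⌋ := fun n =>
      floor_sub_eq (h1 x hx n) (h1 y hy n) (h2 x hx y hy n) (h2 y hy x hx n) (hdni n)
    have habs : ∀ n, ⌊v n⌋ = ⌊u n⌋ := fun n =>
      floor_abs_eq (heni n) (hdni n) (hm n)
    -- convergence of |differences|
    have hut : Tendsto u atTop (nhds |lx - ly|) := (hlx.sub hly).abs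
    have hvt : Tendsto v atTop (nhds |lfx - lfy|) := (hlfx.sub hlfy).abs
    -- sups are not integers
    have hSu : ∀ k : ℤ, (⨆ n, u n) ≠ k := by
      rcases sup_attained_or_limit hut with ⟨n, hn⟩ | hl
      · exact hn ▸ abs_not_int (hdni n)
      · exact hl ▸ abs_not_int (hAidf.2.2.2 x hx y hy hxy lx ly hlx hly)
    have hSv : ∀ k : ℤ, (⨆ n, v n) ≠ k := by
      rcases sup_attained_or_limit hvt with ⟨n, hn⟩ | hl
      · exact hn ▸ abs_not_int (heni n)
      · exact hl ▸ abs_not_int (hBidf.2.2.2 _ hfx _ hfy hfxy lfx lfy hlfx hlfy)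
    obtain ⟨⟨nu, hnu⟩, hubu⟩ := floor_ciSup_spec hut.bddAbove_range hSu
    obtain ⟨⟨nv, hnv⟩, hubv⟩ := floor_ciSup_spec hvt.bddAbove_range hSv
    show ⌊⨆ n, u n⌋ = ⌊⨆ n, v n⌋
    apply le_antisymm
    · calc ⌊⨆ n, u n⌋ = ⌊u nu⌋ := hnu.symm
        _ = ⌊v nu⌋ := (habs nu).symm
        _ ≤ ⌊⨆ n, v n⌋ := hubv nu
    · calc ⌊⨆ n, v n⌋ = ⌊v nv⌋ := hnv.symm
        _ = ⌊u nv⌋ := habs nv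
        _ ≤ ⌊⨆ n, u n⌋ := hubu nv
end

section
/- For any two elements x, y of c whose coordinates and limits avoid integers and integer differences (i.e., {x,y} is an i.d.f. subset of c), one has ⌊‖x - y‖⌋ = max over i ∈ ℕ ∪ {∞} of ⌊|x_i - y_i|⌋, where the sup norm is ‖x - y‖ = sup_i |x_i - y_i|. -/
open Filter Topology Set

/-- for an i.d.f. pair `{x, y}` in `c` (with limits `lx`, `ly`), the floor of
the sup-norm distance is the maximum over `i ∈ ℕ ∪ {∞}` of `⌊|x_i - y_i|⌋`. -/
theorem floor_supDist_eq_max_floor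
    (x y : ℕ → ℝ) (lx ly : ℝ)
    (hx : Tendsto x atTop (nhds lx)) (hy : Tendsto y atTop (nhds ly))
    (hxint : ∀ n, ∀ k : ℤ, x n ≠ (k : ℝ)) (hyint : ∀ n, ∀ k : ℤ, y n ≠ (k : ℝ))
    (hlxint : ∀ k : ℤ, lx ≠ (k : ℝ)) (hlyint : ∀ k : ℤ, ly ≠ (k : ℝ))
    (hdiff : ∀ n, ∀ k : ℤ, x n - y n ≠ (k : ℝ))
    (hldiff : ∀ k : ℤ, lx - ly ≠ (k : ℝ)) :
    ⌊supDist x y⌋ = max ⌊|lx - ly|⌋ (⨆ i, ⌊|x i - y i|⌋) := by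
  set d : ℕ → ℝ := fun n => |x n - y n| with hdre
  set L : ℝ := |lx - ly| with hL
  have hd : Tendsto d atTop (𝓝 L) := ((hx.sub hy).abs)
  have hbdd : BddAbove (Set.range d) := hd.bddAbove_range
  set S : ℝ := ⨆ n, d n with hS
  have hSdist : supDist x y = S := rfl
  have hle : ∀ n, d n ≤ S := fun n => le_ciSup hbdd n
  have hLS : L ≤ S := le_of_tendsto' hd hle
  -- floors of d are bounded above by ⌊S⌋
  have hfle : ∀ n, ⌊d n⌋ ≤ ⌊S⌋ := fun n => Int.floor_le_floor (hle n)
  have hfbdd : BddAbove (Set.range fun n => ⌊d n⌋) := by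
    refine ⟨⌊S⌋, ?_⟩
    rintro z ⟨n, rfl⟩; exact hfle n
  have hmax_le : max ⌊L⌋ (⨆ i, ⌊d i⌋) ≤ ⌊S⌋ := by
    refine max_le (Int.floor_le_floor hLS) (ciSup_le hfle)
  rw [hSdist]
  refine le_antisymm ?_ hmax_le
  rcases eq_or_lt_of_le hLS with heq | hlt
  · rw [← heq]
    exact le_max_left _ _
  · -- sup is attained at some index
    obtain ⟨i, hi⟩ : ∃ i, d i = S := by
      set c : ℝ := (L + S) / 2 with hc
      have hLc : L < c := by rw [hc]; linarith
      have hcS : c < S := by rw [hc]; linarith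
      obtain ⟨N, hN⟩ := (hd.eventually (eventually_lt_nhds hLc)).exists_forall_of_atTop
      have hne : (Finset.range (N + 1)).Nonempty := ⟨0, by simp⟩
      set M : ℝ := (Finset.range (N + 1)).sup' hne d with hM
      have hall : ∀ n, d n ≤ max M c := by
        intro n
        rcases le_or_gt n N with h | h
        · exact le_trans (Finset.le_sup' d (Finset.mem_range.2 (Nat.lt_succ_of_le h)))
            (le_max_left _ _)
        · exact le_trans (hN n h.le).le (le_max_right _ _)
      have hSle : S ≤ max M c := ciSup_le hall
      have hSM : S ≤ M := by
        rcases max_cases M c with ⟨h1, _⟩ | ⟨h1, _⟩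
        · rwa [h1] at hSle
        · rw [h1] at hSle; exact absurd (lt_of_le_of_lt hSle hcS) (lt_irrefl _)
      obtain ⟨i, _, hi⟩ := Finset.exists_mem_eq_sup' hne d
      exact ⟨i, le_antisymm (hle i) (hSM.trans_eq hi)⟩
    rw [← hi]
    exact le_trans (le_ciSup hfbdd i) (le_max_right _ _)
end

section
/- If μ is a probability measure on the space X (where X is c or c_a) with the i.d.f. property, then for the product measure μ^ℕ on X^ℕ, almost every sequence (x^(1), x^(2), ...) of points of X forms a set with the i.d.f. property. -/
open Filter Topology Set MeasureTheory ProbabilityTheory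

/-! Each i.d.f. condition on the family fails only on the preimage of a `μ`-null set under a
single point `Z i`, or of a `μ.prod μ`-null set under a pair `(Z i, Z j)` with `i ≠ j`, whose
law is `μ.prod μ` by independence. There are countably many such conditions. -/

/-- The set `c` of convergent real sequences. -/
def cSet : Set (ℕ → ℝ) := {x | ∃ l : ℝ, Tendsto x atTop (nhds l)}

/-- The set `c_a` of real sequences converging to `a`. -/
def cASet (a : ℝ) : Set (ℕ → ℝ) := {x | Tendsto x atTop (nhds a)}

/-- The family of points `x 0, x 1, …` forms an i.d.f. set in the finite coordinates. -/
def IDFFamilyCoord (x : ℕ → ℕ → ℝ) : Prop :=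
  (∀ i, ∀ n, ∀ k : ℤ, x i n ≠ (k : ℝ)) ∧
  (∀ i j, x i ≠ x j → ∀ n, ∀ k : ℤ, x i n - x j n ≠ (k : ℝ))

/-- The family of points `x 0, x 1, …` forms an i.d.f. set in the limit coordinate. -/
def IDFFamilyLim (x : ℕ → ℕ → ℝ) : Prop :=
  (∀ i, ∀ l : ℝ, Tendsto (x i) atTop (nhds l) → ∀ k : ℤ, l ≠ (k : ℝ)) ∧
  (∀ i j, x i ≠ x j → ∀ li lj : ℝ, Tendsto (x i) atTop (nhds li) →
    Tendsto (x j) atTop (nhds lj) → ∀ k : ℤ, li - lj ≠ (k : ℝ))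

section IIDPullback

variable {Ω E : Type*} [MeasurableSpace Ω] [MeasurableSpace E] {P : Measure Ω} {μ : Measure E}
  {Z : ℕ → Ω → E}

theorem map_prodMk_eq_prod_of_iIndepFun [IsFiniteMeasure P] (hZ : ∀ i, AEMeasurable (Z i) P)
    (hindep : iIndepFun Z P) (hlaw : ∀ i, P.map (Z i) = μ) {i j : ℕ} (hij : i ≠ j) :
    P.map (fun ω => (Z i ω, Z j ω)) = μ.prod μ := by
  rw [(hindep.indepFun hij).map_prod_eq_prod_map_map (hZ i) (hZ j), hlaw i, hlaw j]

theorem ae_forall_of_map_eq (hZ : ∀ i, AEMeasurable (Z i) P) (hlaw : ∀ i, P.map (Z i) = μ)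
    {p : E → Prop} (hp : ∀ᵐ x ∂μ, p x) : ∀ᵐ ω ∂P, ∀ i, p (Z i ω) :=
  ae_all_iff.2 fun i => ae_of_ae_map (hZ i) (by rwa [hlaw i])

theorem ae_forall_ne_of_iIndepFun [IsFiniteMeasure P] (hZ : ∀ i, AEMeasurable (Z i) P)
    (hindep : iIndepFun Z P) (hlaw : ∀ i, P.map (Z i) = μ) {p : E × E → Prop}
    (hp : ∀ᵐ x ∂μ.prod μ, p x) : ∀ᵐ ω ∂P, ∀ i j, i ≠ j → p (Z i ω, Z j ω) := by
  refine ae_all_iff.2 fun i => ae_all_iff.2 fun j => ?_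
  rcases eq_or_ne i j with rfl | hij
  · exact ae_of_all _ fun _ h => absurd rfl h
  · have hpair : ∀ᵐ ω ∂P, p (Z i ω, Z j ω) := ae_of_ae_map ((hZ i).prodMk (hZ j))
      (by rwa [map_prodMk_eq_prod_of_iIndepFun hZ hindep hlaw hij])
    filter_upwards [hpair] with ω hω _ using hω

end IIDPullback

theorem ae_forall_limit_ne_int {ν : Measure (ℕ → ℝ)}
    (h : ν {x | ∃ k : ℤ, Tendsto x atTop (𝓝 (k : ℝ))} = 0) :
    ∀ᵐ x ∂ν, ∀ l : ℝ, Tendsto x atTop (𝓝 l) → ∀ k : ℤ, l ≠ (k : ℝ) := by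
  filter_upwards [measure_eq_zero_iff_ae_notMem.1 h] with x hx l hl k hk
  exact hx ⟨k, hk ▸ hl⟩

theorem ae_forall_limit_sub_ne_int {ν : Measure ((ℕ → ℝ) × (ℕ → ℝ))}
    (h : ν {p | ∃ k : ℤ, Tendsto (fun n => p.1 n - p.2 n) atTop (𝓝 (k : ℝ))} = 0) :
    ∀ᵐ p ∂ν, ∀ l₁ l₂ : ℝ, Tendsto p.1 atTop (𝓝 l₁) → Tendsto p.2 atTop (𝓝 l₂) →
      ∀ k : ℤ, l₁ - l₂ ≠ (k : ℝ) := by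
  filter_upwards [measure_eq_zero_iff_ae_notMem.1 h] with p hp l₁ l₂ h₁ h₂ k hk
  exact hp ⟨k, hk ▸ h₁.sub h₂⟩

theorem ae_idf_of_idf_measure_general
    (X : Set (ℕ → ℝ))
    (μ : Measure (ℕ → ℝ))
    (hcoord : ∀ n : ℕ, μ {x | ∃ k : ℤ, x n = (k : ℝ)} = 0 ∧
      (μ.prod μ) {p | ∃ k : ℤ, p.1 n - p.2 n = (k : ℝ)} = 0)
    (hlim : X = cSet →
      μ {x | ∃ k : ℤ, Tendsto x atTop (nhds (k : ℝ))} = 0 ∧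
      (μ.prod μ) {p | ∃ k : ℤ, Tendsto (fun n => p.1 n - p.2 n) atTop (nhds (k : ℝ))} = 0)
    {Ω : Type} [MeasurableSpace Ω] (P : Measure Ω) [IsProbabilityMeasure P]
    (Z : ℕ → Ω → (ℕ → ℝ)) (hmeas : ∀ i, Measurable (Z i))
    (hindep : iIndepFun Z P)
    (hlaw : ∀ i, Measure.map (Z i) P = μ) :
    ∀ᵐ ω ∂P, IDFFamilyCoord (fun i => Z i ω) ∧
      (X = cSet → IDFFamilyLim (fun i => Z i ω)) := by
  have hZ : ∀ i, AEMeasurable (Z i) P := fun i => (hmeas i).aemeasurable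
  have hcoord₁ : ∀ᵐ x ∂μ, ∀ n, ∀ k : ℤ, x n ≠ (k : ℝ) := ae_all_iff.2 fun n =>
    (measure_eq_zero_iff_ae_notMem.1 (hcoord n).1).mono fun _ => not_exists.1
  have hcoord₂ : ∀ᵐ p ∂μ.prod μ, ∀ n, ∀ k : ℤ, p.1 n - p.2 n ≠ (k : ℝ) := ae_all_iff.2 fun n =>
    (measure_eq_zero_iff_ae_notMem.1 (hcoord n).2).mono fun _ => not_exists.1
  have hlim₁ := eventually_imp_distrib_left.2 fun hc => ae_forall_limit_ne_int (hlim hc).1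
  have hlim₂ := eventually_imp_distrib_left.2 fun hc => ae_forall_limit_sub_ne_int (hlim hc).2
  filter_upwards [ae_forall_of_map_eq hZ hlaw hcoord₁,
    ae_forall_ne_of_iIndepFun hZ hindep hlaw hcoord₂, ae_forall_of_map_eq hZ hlaw hlim₁,
    ae_forall_ne_of_iIndepFun hZ hindep hlaw hlim₂] with ω h₁ h₂ h₃ h₄
  exact ⟨⟨h₁, fun i j hne => h₂ i j (ne_of_apply_ne (fun i => Z i ω) hne)⟩,
    fun hc => ⟨fun i => h₃ i hc, fun i j hne => h₄ i j (ne_of_apply_ne (fun i => Z i ω) hne) hc⟩⟩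

/-- if `μ` is a probability measure on `X` (one of `c` or `c_a`) with the
i.d.f. property, then almost every i.i.d. sequence of points with law `μ` forms an i.d.f.
set (the limit-coordinate conditions being relevant in the case `X = c`). -/
theorem ae_idf_of_idf_measure
    (X : Set (ℕ → ℝ)) (hX : X = cSet ∨ ∃ a : ℝ, X = cASet a)
    (μ : Measure (ℕ → ℝ)) [IsProbabilityMeasure μ] (hμX : μ X = 1)
    (hcoord : ∀ n : ℕ, μ {x | ∃ k : ℤ, x n = (k : ℝ)} = 0 ∧
      (μ.prod μ) {p | ∃ k : ℤ, p.1 n - p.2 n = (k : ℝ)} = 0)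
    (hlim : X = cSet →
      μ {x | ∃ k : ℤ, Tendsto x atTop (nhds (k : ℝ))} = 0 ∧
      (μ.prod μ) {p | ∃ k : ℤ, Tendsto (fun n => p.1 n - p.2 n) atTop (nhds (k : ℝ))} = 0)
    {Ω : Type} [MeasurableSpace Ω] (P : Measure Ω) [IsProbabilityMeasure P]
    (Z : ℕ → Ω → (ℕ → ℝ)) (hmeas : ∀ i, Measurable (Z i))
    (hindep : iIndepFun Z P)
    (hlaw : ∀ i, Measure.map (Z i) P = μ) :
    ∀ᵐ ω ∂P, IDFFamilyCoord (fun i => Z i ω) ∧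
      (X = cSet → IDFFamilyLim (fun i => Z i ω)) :=
  ae_idf_of_idf_measure_general X μ hcoord hlim P Z hmeas hindep hlaw
end

section
/- Let μ = ∏_{n=1}^∞ ν_n be a product-type probability measure on ℝ^ℕ where each ν_n is a non-atomic probability measure on ℝ. Then μ^ℕ-almost every sequence of points (x^(i))_{i∈ℕ} in ℝ^ℕ has the independent order property: for any finite subcollection x^(i_1), ..., x^(i_k) and any finite list of orderings ≺_1, ..., ≺_N of {1,...,k}, there exist distinct coordinate positions j_1, ..., j_N such that for each ℓ, m ≺_ℓ n if and only if {x^(i_m)_{j_ℓ}} < {x^(i_n)_{j_ℓ}}. -/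
open Filter Topology Set MeasureTheory ProbabilityTheory

/-- The independent order property for a sequence of points of `ℝ^ℕ`: for every finite
subcollection and every finite list of orderings (encoded by permutations giving the
increasing enumeration), there are distinct coordinate positions in which the fractional
parts of the chosen points realize each prescribed ordering. -/
def HasIOP (x : ℕ → ℕ → ℝ) : Prop :=
  ∀ (k : ℕ) (idx : Fin k → ℕ), Function.Injective idx →
  ∀ (N : ℕ) (ord : Fin N → Equiv.Perm (Fin k)),
  ∃ j : Fin N → ℕ, Function.Injective j ∧
    ∀ (ℓ : Fin N) (m n : Fin k),
      m < n ↔ Int.fract (x (idx (ord ℓ m)) (j ℓ)) < Int.fract (x (idx (ord ℓ n)) (j ℓ))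

/-!
In a fixed coordinate, the fractional parts of `k` distinct points are i.i.d. with a law without
atoms (the fibres of `Int.fract` are countable), so they are almost surely distinct and, by
exchangeability, realize each of the `k!` orderings with probability `1/k!`. Different
coordinates are independent, so by the second Borel–Cantelli lemma every ordering is realized in
infinitely many coordinates, almost surely. There are countably many choices of points and
ordering, and finitely many orderings can then be served by distinct coordinates.
-/

def orderCell {α : Type*} [Preorder α] {k : ℕ} (σ : Equiv.Perm (Fin k)) : Set (Fin k → α) :=
  {y | StrictMono (y ∘ σ)}

section Orderings

variable {α : Type*} [LinearOrder α] {k : ℕ}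

lemma pairwise_disjoint_orderCell :
    Pairwise (Function.onFun Disjoint (orderCell : Equiv.Perm (Fin k) → Set (Fin k → α))) := by
  intro σ τ hστ
  refine Set.disjoint_left.2 fun y (hσ : StrictMono (y ∘ σ)) (hτ : StrictMono (y ∘ τ)) => hστ ?_
  have hy : Function.Injective y := hσ.injective.of_comp_right σ.surjective
  exact Equiv.ext fun m => hy (congrFun (Tuple.unique_monotone hσ.monotone hτ.monotone) m)

lemma iUnion_orderCell :
    ⋃ σ : Equiv.Perm (Fin k), (orderCell σ : Set (Fin k → α)) = {y | Function.Injective y} := by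
  ext y
  simp only [orderCell, mem_iUnion, mem_ofPred_eq]
  refine ⟨fun ⟨σ, hσ⟩ => hσ.injective.of_comp_right σ.surjective, fun hy => ?_⟩
  exact ⟨Tuple.sort y, (Tuple.monotone_sort y).strictMono_of_injective
    (hy.comp (Tuple.sort y).injective)⟩

end Orderings

lemma exists_injective_forall_mem {N : ℕ} {s : Fin N → Set ℕ} (hs : ∀ i, (s i).Infinite) :
    ∃ f : Fin N → ℕ, Function.Injective f ∧ ∀ i, f i ∈ s i := by
  induction N with
  | zero => exact ⟨finZeroElim, fun a => a.elim0, fun a => a.elim0⟩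
  | succ N ih =>
    obtain ⟨f, hf, hfs⟩ := ih fun i => hs i.succ
    obtain ⟨a, ha, haf⟩ := ((hs 0).sdiff (finite_range f)).nonempty
    exact ⟨Fin.cons a f, Fin.cons_injective_iff.2 ⟨haf, hf⟩, Fin.cases ha hfs⟩

lemma measurableSet_orderCell {k : ℕ} (σ : Equiv.Perm (Fin k)) :
    MeasurableSet (orderCell σ : Set (Fin k → ℝ)) := by
  simp only [orderCell, StrictMono, ofPred_forall]
  exact .iInter fun m => .iInter fun n => .iInter fun _ =>
    measurableSet_lt (measurable_pi_apply _) (measurable_pi_apply _)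

lemma measurePreserving_comp_perm {ι β : Type*} [Fintype ι] [MeasurableSpace β] (μ : Measure β)
    [SigmaFinite μ] (σ : Equiv.Perm ι) :
    MeasurePreserving (fun y : ι → β => y ∘ σ) (Measure.pi fun _ => μ) (Measure.pi fun _ => μ) := by
  convert measurePreserving_arrowCongr' (fun _ => μ) (fun _ => μ) σ.symm (MeasurableEquiv.refl β)
    fun _ => MeasurePreserving.id μ
  ext y
  simp [MeasurableEquiv.arrowCongr', Equiv.arrowCongr', Equiv.arrowCongr]

namespace ProbabilityTheory

variable {Ω : Type*} [MeasurableSpace Ω] {P : Measure Ω}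

lemma iIndepFun.curry {ι κ 𝓧 : Type*} [MeasurableSpace 𝓧] {X : ι × κ → Ω → 𝓧}
    (mX : ∀ p, Measurable (X p)) (h : iIndepFun X P) :
    iIndepFun (fun i ω j => X (i, j) ω) P := by
  have := h.isProbabilityMeasure
  have (p : ι × κ) : IsProbabilityMeasure (P.map (X p)) :=
    Measure.isProbabilityMeasure_map (mX p).aemeasurable
  have hblock (i : ι) :
      P.map (fun ω j => X (i, j) ω) = Measure.infinitePi fun j => P.map (X (i, j)) :=
    (h.precomp (Prod.mk_right_injective i)).map_fun_eq_infinitePi_map fun j => mX _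
  rw [iIndepFun_iff_map_fun_eq_infinitePi_map (fun i => measurable_pi_lambda _ fun j => mX (i, j))]
  simp_rw [hblock]
  have hcurry :
      (fun ω i j => X (i, j) ω) = MeasurableEquiv.curry ι κ 𝓧 ∘ (fun ω p => X p ω) := rfl
  rw [hcurry, ← Measure.map_map (MeasurableEquiv.measurable _) (measurable_pi_lambda _ mX),
    h.map_fun_eq_infinitePi_map mX, Measure.infinitePi_map_curry (fun i j => P.map (X (i, j)))]

lemma iIndepFun.iIndepSet_preimage {ι β : Type*} [MeasurableSpace β] {f : ι → Ω → β}
    (hf : ∀ i, Measurable (f i)) (h : iIndepFun f P) {s : ι → Set β}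
    (hs : ∀ i, MeasurableSet (s i)) :
    iIndepSet (fun i => f i ⁻¹' s i) P :=
  (iIndepSet_iff_meas_biInter fun i => hf i (hs i)).2 fun _ =>
    h.meas_biInter fun i _ => ⟨s i, hs i, rfl⟩

lemma ae_frequently_mem_of_iIndepSet {s : ℕ → Set Ω} (hsm : ∀ n, MeasurableSet (s n))
    (hs : iIndepSet s P) (hsum : ∑' n, P (s n) = ⊤) :
    ∀ᵐ ω ∂P, ∃ᶠ n in atTop, ω ∈ s n := by
  have := hs.isProbabilityMeasure
  have hlimsup := measure_limsup_eq_one hsm hs hsum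
  rw [← prob_compl_eq_zero_iff (MeasurableSet.measurableSet_limsup hsm)] at hlimsup
  filter_upwards [measure_eq_zero_iff_ae_notMem.1 hlimsup] with ω hω
  simpa only [mem_compl_iff, not_not, mem_limsup_iff_frequently_mem] using hω

lemma IndepFun.measure_setOf_eq_eq_zero {α : Type*} [MeasurableSpace α] [MeasurableEq α]
    [IsFiniteMeasure P] {f g : Ω → α} (hf : Measurable f) (hg : Measurable g)
    (hfg : IndepFun f g P) [NullSingletonClass (P.map g)] : P {ω | f ω = g ω} = 0 := by
  have hmap := (indepFun_iff_map_prod_eq_prod_map_map hf.aemeasurable hg.aemeasurable).1 hfg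
  have hsection (x : α) : Prod.mk x ⁻¹' diagonal α = {x} := by ext; simp [eq_comm]
  calc P {ω | f ω = g ω} = P.map (fun ω => (f ω, g ω)) (diagonal α) :=
        (Measure.map_apply (hf.prodMk hg) measurableSet_diagonal).symm
    _ = 0 := by
        rw [hmap, Measure.prod_apply measurableSet_diagonal]
        simp [hsection]

end ProbabilityTheory

lemma ae_injective_pi {ι α : Type*} [Fintype ι] [MeasurableSpace α] [MeasurableEq α]
    {μ : Measure α} [IsProbabilityMeasure μ] [NullSingletonClass μ] :
    ∀ᵐ y ∂Measure.pi (fun _ : ι => μ), Function.Injective y := by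
  have hcoord : iIndepFun (fun i (y : ι → α) => y i) (Measure.pi fun _ => μ) :=
    iIndepFun_pi (X := fun _ => id) fun _ => aemeasurable_id
  have hlaw (i : ι) : (Measure.pi fun _ => μ).map (fun y : ι → α => y i) = μ :=
    (measurePreserving_eval _ i).map_eq
  have hties (m n : ι) (hmn : m ≠ n) : ∀ᵐ y ∂Measure.pi (fun _ : ι => μ), y m ≠ y n := by
    have : NullSingletonClass ((Measure.pi fun _ => μ).map (fun y : ι → α => y n)) := by
      rw [hlaw]; infer_instance
    exact measure_eq_zero_iff_ae_notMem.1 ((hcoord.indepFun hmn).measure_setOf_eq_eq_zero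
      (measurable_pi_apply m) (measurable_pi_apply n))
  filter_upwards [ae_all_iff.2 fun m => ae_all_iff.2 fun n => ae_all_iff.2 (hties m n)]
    with y hy m n
  exact not_imp_not.1 (hy m n)

lemma pi_orderCell {μ : Measure ℝ} [IsProbabilityMeasure μ] [NullSingletonClass μ] {k : ℕ}
    (σ : Equiv.Perm (Fin k)) :
    Measure.pi (fun _ : Fin k => μ) (orderCell σ) = (k.factorial : ENNReal)⁻¹ := by
  set π := Measure.pi fun _ : Fin k => μ
  have hcell (τ : Equiv.Perm (Fin k)) : π (orderCell τ) = π (orderCell 1) := by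
    rw [← (measurePreserving_comp_perm μ τ).measure_preimage
      (measurableSet_orderCell 1).nullMeasurableSet]
    rfl
  have hsum : ∑ τ : Equiv.Perm (Fin k), π (orderCell τ) = 1 := by
    rw [← tsum_fintype (L := SummationFilter.unconditional _),
      ← measure_iUnion pairwise_disjoint_orderCell measurableSet_orderCell,
      ← prob_compl_eq_zero_iff (.iUnion measurableSet_orderCell), iUnion_orderCell]
    exact ae_injective_pi
  rw [Finset.sum_congr rfl fun τ _ => hcell τ, Finset.sum_const, Finset.card_univ,
    Fintype.card_perm, Fintype.card_fin, nsmul_eq_mul, mul_comm] at hsum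
  rw [hcell, ENNReal.eq_inv_of_mul_eq_one_left hsum]

lemma nullSingletonClass_map_fract (ν : Measure ℝ) [NullSingletonClass ν] :
    NullSingletonClass (ν.map Int.fract) where
  measure_singleton a := by
    rw [Measure.map_apply measurable_fract (measurableSet_singleton a)]
    refine measure_mono_null ?_ ((countable_range fun z : ℤ => a + z).measure_zero ν)
    rintro x rfl
    exact ⟨⌊x⌋, Int.fract_add_floor x⟩

lemma ae_infinite_setOf_mem_orderCell {Ω : Type*} [MeasurableSpace Ω] {P : Measure Ω} {k : ℕ}
    {Z : ℕ → Ω → Fin k → ℝ} (hZ : ∀ j, Measurable (Z j)) (hindep : iIndepFun Z P)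
    {μ : ℕ → Measure ℝ} [∀ j, IsProbabilityMeasure (μ j)] [∀ j, NullSingletonClass (μ j)]
    (hlaw : ∀ j, P.map (Z j) = Measure.pi fun _ => μ j) (σ : Equiv.Perm (Fin k)) :
    ∀ᵐ ω ∂P, {j | Z j ω ∈ orderCell σ}.Infinite := by
  have hprob (j : ℕ) : P (Z j ⁻¹' orderCell σ) = (k.factorial : ENNReal)⁻¹ := by
    rw [← Measure.map_apply (hZ j) (measurableSet_orderCell σ), hlaw, pi_orderCell]
  have hsum : ∑' j, P (Z j ⁻¹' orderCell σ) = ⊤ := by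
    simp only [hprob]
    exact ENNReal.tsum_const_eq_top_of_ne_zero (by simp)
  filter_upwards [ae_frequently_mem_of_iIndepSet (fun j => hZ j (measurableSet_orderCell σ))
    (hindep.iIndepSet_preimage hZ fun _ => measurableSet_orderCell σ) hsum] with ω hω
  exact Nat.frequently_atTop_iff_infinite.1 hω

section Blocks

variable {Ω : Type*} [MeasurableSpace Ω] {P : Measure Ω} {X : ℕ → Ω → ℕ → ℝ} {k : ℕ}
  {idx : Fin k → ℕ}

lemma iIndepFun_fract_reindex (hindep : iIndepFun (fun (p : ℕ × ℕ) ω => X p.1 ω p.2) P)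
    (hidx : Function.Injective idx) :
    iIndepFun (fun (p : ℕ × Fin k) ω => Int.fract (X (idx p.2) ω p.1)) P :=
  (hindep.precomp (g := fun p : ℕ × Fin k => (idx p.2, p.1))
    fun _ _ h => Prod.ext (Prod.ext_iff.1 h).2 (hidx (Prod.ext_iff.1 h).1)).comp
      (fun _ => Int.fract) fun _ => measurable_fract

lemma iIndepFun_fract_block (hmeas : ∀ i n, Measurable fun ω => X i ω n)
    (hindep : iIndepFun (fun (p : ℕ × ℕ) ω => X p.1 ω p.2) P) (hidx : Function.Injective idx) :
    iIndepFun (fun j ω m => Int.fract (X (idx m) ω j)) P :=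
  (iIndepFun_fract_reindex hindep hidx).curry fun _ => measurable_fract.comp (hmeas _ _)

lemma map_fract_block {ν : ℕ → Measure ℝ} (hmeas : ∀ i n, Measurable fun ω => X i ω n)
    (hindep : iIndepFun (fun (p : ℕ × ℕ) ω => X p.1 ω p.2) P)
    (hlaw : ∀ i n, P.map (fun ω => X i ω n) = ν n) (hidx : Function.Injective idx) (j : ℕ) :
    P.map (fun ω m => Int.fract (X (idx m) ω j)) = Measure.pi fun _ => (ν j).map Int.fract := by
  have hblock := (iIndepFun_fract_reindex hindep hidx).precomp (Prod.mk_right_injective j)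
  refine (hblock.map_fun_eq_pi_map
    fun m => (measurable_fract.comp (hmeas _ _)).aemeasurable).trans ?_
  congr with m : 1
  rw [← hlaw (idx m) j, Measure.map_map measurable_fract (hmeas _ _)]

end Blocks

theorem ae_iop_of_product_type_general
    {Ω : Type} [MeasurableSpace Ω] (P : Measure Ω)
    (ν : ℕ → Measure ℝ) (hprob : ∀ n, IsProbabilityMeasure (ν n))
    (hna : ∀ (n : ℕ) (a : ℝ), ν n {a} = 0)
    (X : ℕ → Ω → (ℕ → ℝ)) (hmeas : ∀ i n, Measurable fun ω => X i ω n)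
    (hindep : iIndepFun (fun (p : ℕ × ℕ) ω => X p.1 ω p.2) P)
    (hlaw : ∀ i n, Measure.map (fun ω => X i ω n) P = ν n) :
    ∀ᵐ ω ∂P, HasIOP (fun i => X i ω) := by
  have (n : ℕ) : IsProbabilityMeasure ((ν n).map Int.fract) :=
    Measure.isProbabilityMeasure_map measurable_fract.aemeasurable
  have (n : ℕ) : NullSingletonClass ((ν n).map Int.fract) :=
    @nullSingletonClass_map_fract _ ⟨hna n⟩
  have hcells : ∀ᵐ ω ∂P, ∀ k (idx : Fin k → ℕ), Function.Injective idx →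
      ∀ σ : Equiv.Perm (Fin k), {j | (fun m => Int.fract (X (idx m) ω j)) ∈ orderCell σ}.Infinite :=
    ae_all_iff.2 fun k => ae_all_iff.2 fun idx => ae_all_iff.2 fun hidx => ae_all_iff.2 fun σ =>
      ae_infinite_setOf_mem_orderCell (Z := fun j ω m => Int.fract (X (idx m) ω j))
        (fun j => measurable_pi_lambda _ fun m => measurable_fract.comp (hmeas _ _))
        (iIndepFun_fract_block hmeas hindep hidx) (map_fract_block hmeas hindep hlaw hidx) σ
  filter_upwards [hcells] with ω hω k idx hidx N ord
  obtain ⟨j, hj, hmem⟩ := exists_injective_forall_mem fun ℓ => hω k idx hidx (ord ℓ)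
  exact ⟨j, hj, fun ℓ m n => (hmem ℓ).lt_iff_lt.symm⟩

/-- for an i.i.d. sequence of points of `ℝ^ℕ`, each with a fixed product-type
law with non-atomic factors `ν n` (all coordinates of all points being independent), almost
every realization has the independent order property. -/
theorem ae_iop_of_product_type
    {Ω : Type} [MeasurableSpace Ω] (P : Measure Ω) [IsProbabilityMeasure P]
    (ν : ℕ → Measure ℝ) (hprob : ∀ n, IsProbabilityMeasure (ν n))
    (hna : ∀ (n : ℕ) (a : ℝ), ν n {a} = 0)
    (X : ℕ → Ω → (ℕ → ℝ)) (hmeas : ∀ i n, Measurable fun ω => X i ω n)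
    (hindep : iIndepFun (fun (p : ℕ × ℕ) ω => X p.1 ω p.2) P)
    (hlaw : ∀ i n, Measure.map (fun ω => X i ω n) P = ν n) :
    ∀ᵐ ω ∂P, HasIOP (fun i => X i ω) :=
  ae_iop_of_product_type_general P ν hprob hna X hmeas hindep hlaw
end

section
/- The measure μ_0 on c_0 given as the law of a sequence of independent normal random variables Y_n with mean 0 and variance (log n)^{-2} is fully supported on c_0: for every x ∈ c_0 and r > 0, μ_0(B(x,r)) > 0, where B(x,r) is the open sup-norm ball. -/
/-!
Take the closed balls `S n` of radius `r / 2` around `x n`. Since `x n → 0` and the variances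
`(log n)⁻²` decay, the Gaussian tail bound gives `P (Y n ∉ S n) ≤ 2 exp (-(r / 4)² (log n)² / 2)`
eventually, which is summable. By Borel–Cantelli, almost surely `Y n ∈ S n` for all large `n`, so
`P (∀ n ≥ K, Y n ∈ S n) > 0` for some `K`. By independence this event is independent of
`∀ n < K, Y n ∈ S n`, whose probability is a finite product of Gaussian masses of balls, hence
positive.
-/

open Filter MeasureTheory ProbabilityTheory Real Set

namespace ProbabilityTheory

lemma isOpenPosMeasure_gaussianReal (m : ℝ) {v : NNReal} (hv : v ≠ 0) :
    (gaussianReal m v).IsOpenPosMeasure :=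
  (gaussianReal_absolutelyContinuous' m hv).isOpenPosMeasure

lemma hasSubgaussianMGF_id_gaussianReal (v : NNReal) :
    HasSubgaussianMGF id v (gaussianReal 0 v) where
  integrable_exp_mul := integrable_exp_mul_gaussianReal
  mgf_le t := by simp [mgf_id_gaussianReal]

lemma HasSubgaussianMGF.measureReal_abs_ge_le {Ω : Type*} [MeasurableSpace Ω]
    {μ : Measure Ω} [IsFiniteMeasure μ] {X : Ω → ℝ} {c : NNReal} (h : HasSubgaussianMGF X c μ)
    {ε : ℝ} (hε : 0 ≤ ε) : μ.real {ω | ε ≤ |X ω|} ≤ 2 * exp (-ε ^ 2 / (2 * c)) := by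
  have hsplit : {ω | ε ≤ |X ω|} = {ω | ε ≤ X ω} ∪ {ω | ε ≤ (-X) ω} := by
    ext ω
    simp only [mem_ofPred_eq, mem_union, Pi.neg_apply, le_abs]
  calc μ.real {ω | ε ≤ |X ω|} ≤ μ.real {ω | ε ≤ X ω} + μ.real {ω | ε ≤ (-X) ω} :=
        hsplit ▸ measureReal_union_le _ _
    _ ≤ exp (-ε ^ 2 / (2 * c)) + exp (-ε ^ 2 / (2 * c)) :=
        add_le_add (h.measure_ge_le hε) (h.neg.measure_ge_le hε)
    _ = 2 * exp (-ε ^ 2 / (2 * c)) := by ring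

end ProbabilityTheory

lemma summable_exp_neg_mul_log_sq {c : ℝ} (hc : 0 < c) :
    Summable fun n : ℕ => exp (-(c * log n ^ 2)) := by
  refine (summable_nat_rpow.mpr (by norm_num : (-2 : ℝ) < -1)).of_norm_bounded_eventually_nat ?_
  have hlog : Tendsto (fun n : ℕ => log n) atTop atTop :=
    tendsto_log_atTop.comp tendsto_natCast_atTop_atTop
  filter_upwards [hlog.eventually_ge_atTop (2 / c), eventually_gt_atTop 0] with n hlogn hn
  rw [norm_of_nonneg (exp_nonneg _), rpow_def_of_pos (by exact_mod_cast hn), exp_le_exp]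
  have : 2 ≤ c * log n := by rwa [div_le_iff₀' hc] at hlogn
  nlinarith

lemma tsum_measure_ne_top_of_summable_measureReal {α : Type*} [MeasurableSpace α]
    {μ : Measure α} [IsFiniteMeasure μ] {s : ℕ → Set α} (hs : Summable fun n => μ.real (s n)) :
    ∑' n, μ (s n) ≠ ⊤ := by
  rw [tsum_congr fun n => (ofReal_measureReal (μ := μ) (s := s n)).symm,
    ← ENNReal.ofReal_tsum_of_nonneg (fun _ => measureReal_nonneg) hs]
  exact ENNReal.ofReal_ne_top

lemma exists_measure_biInter_Ici_pos {α : Type*} [MeasurableSpace α] {μ : Measure α} [NeZero μ]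
    {s : ℕ → Set α} (hs : ∑' n, μ (s n)ᶜ ≠ ⊤) : ∃ K, 0 < μ (⋂ n ∈ Ici K, s n) := by
  have hae : ∀ᵐ x ∂μ, x ∈ ⋃ K, ⋂ n ∈ Ici K, s n := by
    filter_upwards [ae_eventually_notMem hs] with x hx
    simpa [eventually_atTop] using hx
  have hunion : μ (⋃ K, ⋂ n ∈ Ici K, s n) ≠ 0 := by
    rw [measure_congr (ae_eq_univ.mpr (ae_iff.mp hae))]
    exact Measure.measure_univ_ne_zero.mpr (NeZero.ne μ)
  simpa [pos_iff_ne_zero, measure_iUnion_null_iff] using hunion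

namespace ProbabilityTheory.iIndepFun

variable {Ω E : Type*} [MeasurableSpace Ω] [MeasurableSpace E] {μ : Measure Ω}

lemma measure_biInter_preimage_inter_of_disjoint {ι : Type*} [Countable ι] {Y : ι → Ω → E}
    {S : ι → Set E} (hindep : iIndepFun Y μ)
    (hY : ∀ i, Measurable (Y i)) (hS : ∀ i, MeasurableSet (S i)) {I J : Set ι}
    (hIJ : Disjoint I J) :
    μ ((⋂ i ∈ I, Y i ⁻¹' S i) ∩ ⋂ j ∈ J, Y j ⁻¹' S j) =
      μ (⋂ i ∈ I, Y i ⁻¹' S i) * μ (⋂ j ∈ J, Y j ⁻¹' S j) := by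
  have hmeas : ∀ K : Set ι,
      MeasurableSet[⨆ i ∈ K, MeasurableSpace.comap (Y i) inferInstance] (⋂ i ∈ K, Y i ⁻¹' S i) :=
    fun K => MeasurableSet.biInter K.to_countable fun i hi =>
      le_iSup₂ (f := fun i (_ : i ∈ K) => MeasurableSpace.comap (Y i) inferInstance) i hi _
        ⟨S i, hS i, rfl⟩
  exact (Indep_iff _ _ μ).mp (indep_iSup_of_disjoint (fun i => (hY i).comap_le)
    ((iIndepFun_iff_iIndep _ _ μ).mp hindep) hIJ) _ _ (hmeas I) (hmeas J)

lemma measure_iInter_preimage_pos [IsProbabilityMeasure μ] {Y : ℕ → Ω → E} {S : ℕ → Set E}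
    (hindep : iIndepFun Y μ) (hY : ∀ n, Measurable (Y n)) (hS : ∀ n, MeasurableSet (S n))
    (hpos : ∀ n, 0 < μ (Y n ⁻¹' S n)) (hsum : ∑' n, μ (Y n ⁻¹' S n)ᶜ ≠ ⊤) :
    0 < μ (⋂ n, Y n ⁻¹' S n) := by
  obtain ⟨K, htail⟩ := exists_measure_biInter_Ici_pos hsum
  have hhead : 0 < μ (⋂ n ∈ Finset.range K, Y n ⁻¹' S n) := by
    rw [hindep.measure_inter_preimage_eq_mul _ fun n _ => hS n]
    exact CanonicallyOrderedAdd.prod_pos.mpr fun n _ => hpos n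
  have hsplit : ⋂ n, Y n ⁻¹' S n =
      (⋂ n ∈ (Finset.range K : Set ℕ), Y n ⁻¹' S n) ∩ ⋂ n ∈ Ici K, Y n ⁻¹' S n := by
    rw [← biInter_union, Finset.coe_range, Iio_union_Ici, biInter_univ]
  rw [hsplit, measure_biInter_preimage_inter_of_disjoint hindep hY hS
    (by simp [Finset.coe_range, Iio_disjoint_Ici])]
  exact ENNReal.mul_pos hhead.ne' htail.ne'

end ProbabilityTheory.iIndepFun

lemma summable_measureReal_abs_ge_of_map_eq_gaussianReal_inv_log_sq {Ω : Type*}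
    [MeasurableSpace Ω] {P : Measure Ω} [IsProbabilityMeasure P] {Y : ℕ → Ω → ℝ} (hY : ∀ n, Measurable (Y n))
    (hlaw : ∀ n, 2 ≤ n → P.map (Y n) = gaussianReal 0 (toNNReal ((log n ^ 2)⁻¹)))
    {ε : ℝ} (hε : 0 < ε) : Summable fun n => P.real {ω | ε ≤ |Y n ω|} := by
  refine ((summable_exp_neg_mul_log_sq (c := ε ^ 2 / 2) (by positivity)).mul_left 2
    ).of_norm_bounded_eventually_nat ?_
  filter_upwards [eventually_ge_atTop 2] with n hn
  have hY_subgaussian : HasSubgaussianMGF (Y n) (toNNReal ((log n ^ 2)⁻¹)) P :=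
    (HasSubgaussianMGF.id_map_iff (hY n).aemeasurable).mp
      (hlaw n hn ▸ hasSubgaussianMGF_id_gaussianReal _)
  rw [norm_of_nonneg measureReal_nonneg]
  refine (hY_subgaussian.measureReal_abs_ge_le hε.le).trans_eq ?_
  rw [coe_toNNReal _ (by positivity), div_mul_eq_div_div, div_inv_eq_mul, neg_div, neg_mul]

/-- the law of the sequence of independent centred normal random variables
`Y n` with variance `(log n)⁻²` (for `n ≥ 2`; nondegenerate normal in the remaining
coordinates) is fully supported on `c₀`: every open sup-norm ball around a point of `c₀`
has positive probability. -/
theorem gaussian_seq_fully_supported_on_c0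
    {Ω : Type} [MeasurableSpace Ω] (P : Measure Ω) [IsProbabilityMeasure P]
    (Y : ℕ → Ω → ℝ) (hmeas : ∀ n, Measurable (Y n))
    (hindep : iIndepFun Y P)
    (hlaw : ∀ n, 2 ≤ n →
      Measure.map (Y n) P = gaussianReal 0 (Real.toNNReal (((Real.log n) ^ 2)⁻¹)))
    (hlaw' : ∀ n < 2, ∃ v : NNReal, v ≠ 0 ∧ Measure.map (Y n) P = gaussianReal 0 v)
    (x : ℕ → ℝ) (hx : Tendsto x atTop (nhds 0)) (r : ℝ) (hr : 0 < r) :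
    0 < P {ω | ∃ s : ℝ, s < r ∧ ∀ n, |Y n ω - x n| ≤ s} := by
  have hlaw_nondegenerate : ∀ n, ∃ v : NNReal, v ≠ 0 ∧ P.map (Y n) = gaussianReal 0 v := by
    intro n
    rcases lt_or_ge n 2 with hn | hn
    · exact hlaw' n hn
    · have : 0 < log n := log_pos (by exact_mod_cast hn)
      exact ⟨_, (toNNReal_pos.mpr (by positivity)).ne', hlaw n hn⟩
  obtain ⟨N, hN⟩ : ∃ N, ∀ n ≥ N, |x n| < r / 4 := by
    simpa [Real.dist_eq] using Metric.tendsto_atTop.mp hx (r / 4) (by positivity)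
  set S : ℕ → Set ℝ := fun n => Metric.closedBall (x n) (r / 2)
  have hpos : ∀ n, 0 < P (Y n ⁻¹' S n) := by
    intro n
    obtain ⟨v, hv, hmap⟩ := hlaw_nondegenerate n
    have := isOpenPosMeasure_gaussianReal 0 hv
    rw [← Measure.map_apply (hmeas n) measurableSet_closedBall, hmap]
    exact Metric.measure_closedBall_pos _ _ (by positivity)
  have hsum : Summable fun n => P.real (Y n ⁻¹' S n)ᶜ := by
    refine (summable_measureReal_abs_ge_of_map_eq_gaussianReal_inv_log_sq hmeas hlaw (ε := r / 4)
      (by positivity)).of_norm_bounded_eventually_nat ?_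
    filter_upwards [eventually_ge_atTop N] with n hn
    rw [norm_of_nonneg measureReal_nonneg]
    refine measureReal_mono fun ω hω => ?_
    simp only [S, mem_compl_iff, mem_preimage, Metric.mem_closedBall, Real.dist_eq, not_le] at hω
    show r / 4 ≤ |Y n ω|
    linarith [abs_sub (Y n ω) (x n), hN n hn]
  refine (hindep.measure_iInter_preimage_pos hmeas (fun n => measurableSet_closedBall) hpos
    (tsum_measure_ne_top_of_summable_measureReal hsum)).trans_le (measure_mono ?_)
  intro ω hω
  exact ⟨r / 2, by linarith, fun n => by simpa [S, Real.dist_eq] using mem_iInter.mp hω n⟩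
end

section
/- Let a ∈ (0,1) and let V and W be dense, countable, i.d.f. subsets of c_a satisfying the independent order property. If G and H are g.e.c. geometric 1-graphs with vertex sets V and W respectively, then G ≅ H. -/
open Filter Topology Set

/-- A subset of `c_a` is integer-distance-free (only finite coordinates considered). -/
def IDFSetA (A : Set (ℕ → ℝ)) : Prop :=
  (∀ x ∈ A, ∀ n, ∀ k : ℤ, x n ≠ (k : ℝ)) ∧
  (∀ x ∈ A, ∀ y ∈ A, x ≠ y → ∀ n, ∀ k : ℤ, x n - y n ≠ (k : ℝ))

/-- The independent order property for a subset of `c_a`: any finite injective tuple of its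
points realizes, in suitable distinct coordinate positions, any finite list of orderings of
the fractional parts (orderings encoded by permutations giving the increasing enumeration). -/
def HasIOPSet (A : Set (ℕ → ℝ)) : Prop :=
  ∀ (k : ℕ) (pts : Fin k → (ℕ → ℝ)), (∀ m, pts m ∈ A) → Function.Injective pts →
  ∀ (N : ℕ) (ord : Fin N → Equiv.Perm (Fin k)),
  ∃ j : Fin N → ℕ, Function.Injective j ∧
    ∀ (ℓ : Fin N) (m n : Fin k),
      m < n ↔ Int.fract (pts (ord ℓ m) (j ℓ)) < Int.fract (pts (ord ℓ n) (j ℓ))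

/-- Threshold 1. -/
def Threshold1 {V : Set (ℕ → ℝ)} (G : SimpleGraph V) : Prop :=
  ∀ u v : V, G.Adj u v → supDist u v < 1

/-- Geometric existential closure at level 1. -/
def GEC {V : Set (ℕ → ℝ)} (G : SimpleGraph V) : Prop :=
  ∀ δ' : ℝ, 0 < δ' → δ' < 1 → ∀ x : V, ∀ A B : Finset V, Disjoint A B →
    (∀ w : V, w ∈ A ∨ w ∈ B → supDist x w < 1) →
    ∃ z : V, z ∉ A ∧ z ∉ B ∧ z ≠ x ∧
      (∀ a ∈ A, G.Adj z a) ∧ (∀ b ∈ B, ¬ G.Adj z b) ∧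
      (∀ w : V, w ∈ A ∨ w ∈ B → supDist z w < 1) ∧ supDist x z < δ'


/-!
Back and forth. Alongside a finite partial isomorphism we carry a finite partial matching of
coordinates: at a matched pair `(n, m)` the `V`-points differ at `n` by the same integer parts as
their images differ at `m`, and at an unmatched coordinate all points of a side share one unit
cell. Since a non-integer difference has absolute value `< 1` exactly when its floor is `0` or
`-1`, this makes `supDist < 1`, hence possible adjacency, the same on both sides.

To add a point `v`: it leaves the common cell only at finitely many coordinates (everything
tends to the non-integer `a`); match these with fresh coordinates on the other side where the
images have the same order of fractional parts, which the independent order property provides.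
Then prescribe the image coordinatewise inside the cells required by the matching (they pairwise
overlap, so they have a common interior point), approximate this target in `W` by density, and
let geometric existential closure at the approximant realise the adjacencies of `v` among the
points it is close to.
-/

lemma exists_chain_of_back_and_forth {ι α β : Type*} [Countable α] [Countable β] [Nonempty ι]
    (rel : ι → α → β → Prop)
    (forth : ∀ s a, ∃ t, rel s ≤ rel t ∧ ∃ b, rel t a b)
    (back : ∀ s b, ∃ t, rel s ≤ rel t ∧ ∃ a, rel t a b) :
    ∃ seq : ℕ → ι, Monotone (rel ∘ seq) ∧ (∀ a, ∃ b n, rel (seq n) a b) ∧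
      ∀ b, ∃ a n, rel (seq n) a b := by
  let := Encodable.ofCountable α
  let := Encodable.ofCountable β
  choose F hF hFa using forth
  choose B hB hBb using back
  -- stage `n` absorbs the `n`-th element of `α`, then the `n`-th element of `β`
  let forthStep (n : ℕ) (s : ι) : ι := (Encodable.decode n : Option α).elim s (F s)
  let step (n : ℕ) (s : ι) : ι :=
    (Encodable.decode n : Option β).elim (forthStep n s) (B (forthStep n s))
  let seq (n : ℕ) : ι := Nat.rec (Classical.arbitrary ι) step n
  have forthStep_le (n s) : rel s ≤ rel (forthStep n s) := by
    rcases h : (Encodable.decode n : Option α) with _ | a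
    · simp [forthStep, h]
    · simpa [forthStep, h] using hF s a
  have le_step (n s) : rel (forthStep n s) ≤ rel (step n s) := by
    rcases h : (Encodable.decode n : Option β) with _ | b
    · simp [step, h]
    · simpa [step, h] using hB _ b
  refine ⟨seq, monotone_nat_of_le_succ fun n => (forthStep_le n (seq n)).trans (le_step n _),
    fun a => ?_, fun b => ?_⟩
  · obtain ⟨b, hb⟩ := hFa (seq (Encodable.encode a)) a
    refine ⟨b, Encodable.encode a + 1, le_step _ _ _ _ ?_⟩
    simpa only [forthStep, Encodable.encodek, Option.elim] using hb
  · obtain ⟨a, ha⟩ := hBb (forthStep (Encodable.encode b) (seq (Encodable.encode b))) b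
    refine ⟨a, Encodable.encode b + 1, ?_⟩
    show rel (step _ (seq _)) a b
    simpa only [step, Encodable.encodek, Option.elim] using ha

theorem exists_equiv_of_back_and_forth {ι α β : Type*} [Countable α] [Countable β] [Nonempty ι]
    (rel : ι → α → β → Prop)
    (functional : ∀ s a b b', rel s a b → rel s a b' → b = b')
    (injective : ∀ s a a' b, rel s a b → rel s a' b → a = a')
    (forth : ∀ s a, ∃ t, rel s ≤ rel t ∧ ∃ b, rel t a b)
    (back : ∀ s b, ∃ t, rel s ≤ rel t ∧ ∃ a, rel t a b) :
    ∃ e : α ≃ β, ∀ a a', ∃ s, rel s a (e a) ∧ rel s a' (e a') := by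
  obtain ⟨seq, mono, total, surjective⟩ := exists_chain_of_back_and_forth rel forth back
  have common {a b a' b'} (h : ∃ n, rel (seq n) a b) (h' : ∃ n, rel (seq n) a' b') :
      ∃ n, rel (seq n) a b ∧ rel (seq n) a' b' := by
    obtain ⟨n, hn⟩ := h
    obtain ⟨n', hn'⟩ := h'
    exact ⟨max n n', mono (le_max_left n n') _ _ hn, mono (le_max_right n n') _ _ hn'⟩
  choose f hf using total
  choose g hg using surjective
  let e : α ≃ β :=
    { toFun := f
      invFun := g
      left_inv := fun a => by
        obtain ⟨n, h, h'⟩ := common (hf a) (hg (f a))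
        exact injective _ _ _ _ h' h
      right_inv := fun b => by
        obtain ⟨n, h, h'⟩ := common (hg b) (hf (g b))
        exact functional _ _ _ _ h' h }
  refine ⟨e, fun a a' => ?_⟩
  obtain ⟨n, h⟩ := common (hf a) (hf a')
  exact ⟨seq n, h⟩

lemma exists_pos_le_of_tendsto {g : ℕ → ℝ} {L : ℝ} (hg : Tendsto g atTop (𝓝 L)) (hL : 0 < L)
    (hpos : ∀ n, 0 < g n) : ∃ ρ > 0, ∀ n, ρ ≤ g n := by
  obtain ⟨ρ, hρ, hle⟩ := hg.isCompact_insert_range.exists_isLeast (insert_nonempty _ _)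
  refine ⟨ρ, ?_, fun n => hle (mem_insert_of_mem _ (mem_range_self n))⟩
  rcases hρ with rfl | ⟨n, rfl⟩
  exacts [hL, hpos n]

lemma Finset.exists_injOn_forall_mem {ι α : Type*} [Nonempty α] (D : Finset ι)
    (M : ι → Set α) (hM : ∀ i ∈ D, (M i).Infinite) :
    ∃ μ : ι → α, Set.InjOn μ D ∧ ∀ i ∈ D, μ i ∈ M i := by
  classical
  induction D using Finset.induction_on with
  | empty => exact ⟨fun _ => Classical.arbitrary α, by simp, by simp⟩
  | insert i D hi ih =>
    obtain ⟨μ, hinj, hμ⟩ := ih fun j hj => hM j (mem_insert_of_mem hj)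
    obtain ⟨m, hm, hmD⟩ := (hM i (mem_insert_self i D)).exists_notMem_finset (D.image μ)
    have hμ' : ∀ j ∈ D, Function.update μ i m j = μ j := fun j hj =>
      Function.update_of_ne (ne_of_mem_of_not_mem hj hi) _ _
    refine ⟨Function.update μ i m, ?_, ?_⟩
    · rw [coe_insert, Set.injOn_insert (by simpa using hi), Function.update_self]
      refine ⟨fun j hj k hk h => hinj hj hk (by rwa [hμ' j hj, hμ' k hk] at h), ?_⟩
      rintro ⟨j, hj, hji⟩
      rw [hμ' j hj] at hji
      exact hmD (mem_image.2 ⟨j, hj, hji⟩)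
    · intro j hj
      rcases mem_insert.1 hj with rfl | hj
      · simpa using hm
      · rw [hμ' j hj]; exact hμ j hj

section SupDist

variable {a : ℝ} {x y : ℕ → ℝ}

lemma tendsto_abs_sub (hx : Tendsto x atTop (𝓝 a)) (hy : Tendsto y atTop (𝓝 a)) :
    Tendsto (fun n => |x n - y n|) atTop (𝓝 0) := by
  simpa using (hx.sub hy).abs

lemma abs_sub_le_supDist (hx : Tendsto x atTop (𝓝 a)) (hy : Tendsto y atTop (𝓝 a)) (n : ℕ) :
    |x n - y n| ≤ supDist x y :=
  le_ciSup (tendsto_abs_sub hx hy).bddAbove_range n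

lemma supDist_lt_iff (hx : Tendsto x atTop (𝓝 a)) (hy : Tendsto y atTop (𝓝 a)) {c : ℝ}
    (hc : 0 < c) : supDist x y < c ↔ ∀ n, |x n - y n| < c := by
  refine ⟨fun h n => (abs_sub_le_supDist hx hy n).trans_lt h, fun h => ?_⟩
  obtain ⟨ρ, hρ, hle⟩ := exists_pos_le_of_tendsto
    (tendsto_const_nhds.sub (tendsto_abs_sub hx hy)) (by simpa using hc) fun n => sub_pos.2 (h n)
  exact (ciSup_le fun n => le_sub_comm.1 (hle n)).trans_lt (sub_lt_self c hρ)

end SupDist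

lemma eventually_floor_eq {a : ℝ} {x : ℕ → ℝ} (hx : Tendsto x atTop (𝓝 a))
    (ha : ∀ k : ℤ, a ≠ k) : ∀ᶠ n in atTop, ⌊x n⌋ = ⌊a⌋ := by
  have hmem : Ioo (⌊a⌋ : ℝ) (⌊a⌋ + 1) ∈ 𝓝 a :=
    Ioo_mem_nhds ((Int.floor_le a).lt_of_ne (ha ⌊a⌋).symm) (Int.lt_floor_add_one a)
  filter_upwards [hx hmem] with n hn
  exact Int.floor_eq_iff.2 ⟨hn.1.le, hn.2⟩

lemma finite_setOf_exists_floor_ne {a : ℝ} (ha : ∀ k : ℤ, a ≠ k) {x : ℕ → ℝ}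
    (hx : Tendsto x atTop (𝓝 a)) {ι : Type*} (s : Finset ι) {y : ι → ℕ → ℝ}
    (hy : ∀ i ∈ s, Tendsto (y i) atTop (𝓝 a)) : {n | ∃ i ∈ s, ⌊x n⌋ ≠ ⌊y i n⌋}.Finite := by
  have : ∀ᶠ n in atTop, ∀ i ∈ s, ⌊x n⌋ = ⌊y i n⌋ := by
    filter_upwards [eventually_floor_eq hx ha,
      (eventually_all_finset s).2 fun i hi => eventually_floor_eq (hy i hi) ha] with n hx hy i hi
    rw [hx, hy i hi]
  rw [← Nat.cofinite_eq_atTop, eventually_cofinite] at this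
  simpa using this

lemma exists_pos_floor_eq_of_tendsto {a : ℝ} {w : ℕ → ℝ} (hw : Tendsto w atTop (𝓝 a))
    (ha : ∀ k : ℤ, a ≠ k) (hw' : ∀ m, ∀ k : ℤ, w m ≠ k) :
    ∃ ρ > 0, ∀ m r, |r - w m| < ρ → ⌊r⌋ = ⌊w m⌋ := by
  have hfract : Tendsto (fun m => Int.fract (w m)) atTop (𝓝 (Int.fract a)) :=
    (continuousAt_fract (ha ⌊a⌋)).tendsto.comp hw
  have fract_pos {t : ℝ} (ht : ∀ k : ℤ, t ≠ k) : 0 < Int.fract t := Int.fract_pos.2 (ht ⌊t⌋)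
  obtain ⟨ρ, hρ, hle⟩ := exists_pos_le_of_tendsto (hfract.min (tendsto_const_nhds.sub hfract))
    (lt_min (fract_pos ha) (sub_pos.2 (Int.fract_lt_one a)))
    fun m => lt_min (fract_pos (hw' m)) (sub_pos.2 (Int.fract_lt_one _))
  refine ⟨ρ, hρ, fun m r hr => Int.floor_eq_iff.2 ?_⟩
  have h1 := (hle m).trans (min_le_left _ _)
  have h2 := (hle m).trans (min_le_right _ _)
  rw [abs_lt] at hr
  rw [Int.fract] at h1 h2
  constructor <;> linarith

lemma exists_forall_mem_Ioo_of_lt {ι : Type*} (s : Finset ι) (l : ι → ℝ)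
    (h : ∀ i ∈ s, ∀ j ∈ s, l i < l j + 1) :
    ∃ ξ, ∃ ρ > 0, ∀ r, |r - ξ| < ρ → ∀ i ∈ s, r ∈ Ioo (l i) (l i + 1) := by
  rcases s.eq_empty_or_nonempty with rfl | hs
  · exact ⟨0, 1, one_pos, by simp⟩
  obtain ⟨i₀, hi₀, hmax⟩ := s.exists_max_image l hs
  obtain ⟨j₀, hj₀, hmin⟩ := s.exists_min_image l hs
  have := h i₀ hi₀ j₀ hj₀
  refine ⟨(l i₀ + l j₀ + 1) / 2, (l j₀ + 1 - l i₀) / 2, by linarith, fun r hr i hi => ?_⟩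
  rw [abs_lt] at hr
  have := hmax i hi
  have := hmin i hi
  constructor <;> linarith

lemma abs_lt_one_iff_of_mem_Ioo_floor {u u' : ℝ} (hu : u ≠ -1)
    (hu' : u' ∈ Ioo (⌊u⌋ : ℝ) (⌊u⌋ + 1)) : |u| < 1 ↔ |u'| < 1 := by
  obtain ⟨hlo, hhi⟩ := hu'
  have hfloor : |u| < 1 ↔ -1 ≤ ⌊u⌋ ∧ ⌊u⌋ ≤ 0 := by
    rw [abs_lt, Int.le_floor, ← Int.lt_add_one_iff, Int.floor_lt]
    push_cast
    exact ⟨fun h => ⟨h.1.le, by linarith⟩, fun h => ⟨h.1.lt_of_ne' hu, by linarith⟩⟩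
  rw [hfloor, abs_lt]
  constructor
  · rintro ⟨h1, h2⟩
    have h1' : (-1 : ℝ) ≤ ⌊u⌋ := by exact_mod_cast h1
    have h2' : (⌊u⌋ : ℝ) ≤ 0 := by exact_mod_cast h2
    constructor <;> linarith
  · rintro ⟨h1, h2⟩
    have h1' : (-2 : ℝ) < ⌊u⌋ := by linarith
    have h2' : (⌊u⌋ : ℝ) < 1 := by linarith
    constructor
    · have : (-2 : ℤ) < ⌊u⌋ := by exact_mod_cast h1'
      omega
    · have : ⌊u⌋ < 1 := by exact_mod_cast h2'
      omega

lemma floor_neg_eq_of_mem_Ioo_floor {u u' : ℝ} (hu : u ∉ range ((↑) : ℤ → ℝ))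
    (hu' : u' ∈ Ioo (⌊u⌋ : ℝ) (⌊u⌋ + 1)) : ⌊-u⌋ = ⌊-u'⌋ := by
  rw [Int.floor_neg, Int.floor_neg, (Int.ceil_eq_floor_add_one_iff_notMem u).2 hu, neg_inj,
    eq_comm, Int.ceil_eq_iff]
  push_cast
  exact ⟨by linarith [hu'.1], hu'.2.le⟩

lemma floor_sub_eq_floor_sub_of_fract_lt_iff {s t s' t' : ℝ} (h : ⌊s⌋ = ⌊t⌋) (h' : ⌊s'⌋ = ⌊t'⌋)
    (hlt : Int.fract s < Int.fract t ↔ Int.fract s' < Int.fract t') : ⌊s - t⌋ = ⌊s' - t'⌋ := by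
  have key {s t : ℝ} (h : ⌊s⌋ = ⌊t⌋) : ⌊s - t⌋ = if Int.fract s < Int.fract t then -1 else 0 := by
    have hst : s - t = Int.fract s - Int.fract t := by simp only [Int.fract, h]; ring
    have := Int.fract_nonneg s; have := Int.fract_lt_one s
    have := Int.fract_nonneg t; have := Int.fract_lt_one t
    rw [hst, Int.floor_eq_iff]
    split_ifs <;> push_cast <;> constructor <;> linarith
  rw [key h, key h', if_congr hlt rfl rfl]

lemma HasIOPSet.infinite_setOf_fract_lt_iff {A : Set (ℕ → ℝ)} (hA : HasIOPSet A) {ι : Type*}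
    [Fintype ι] (pts : ι → ℕ → ℝ) (hpts : ∀ i, pts i ∈ A) (hinj : Function.Injective pts)
    (f : ι → ℝ) (hf : Function.Injective f) :
    {m | ∀ i j, f i < f j ↔ Int.fract (pts i m) < Int.fract (pts j m)}.Infinite := by
  set σ := Fintype.equivFin ι
  set τ := Tuple.sort (f ∘ σ.symm)
  have hτ : StrictMono ((f ∘ σ.symm) ∘ τ) :=
    (Tuple.monotone_sort _).strictMono_of_injective (hf.comp (σ.symm.injective.comp τ.injective))
  intro hfin
  obtain ⟨j, hj, hjord⟩ := hA _ (pts ∘ σ.symm) (fun i => hpts _) (hinj.comp σ.symm.injective)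
    (hfin.toFinset.card + 1) fun _ => τ
  have hmaps (ℓ) : j ℓ ∈ hfin.toFinset := by
    rw [Set.Finite.mem_toFinset]
    intro i i'
    have := hjord ℓ (τ.symm (σ i)) (τ.symm (σ i'))
    simp only [Function.comp_apply, Equiv.apply_symm_apply, Equiv.symm_apply_apply] at this
    rw [← this, ← hτ.lt_iff_lt]
    simp
  simpa using Finset.card_le_card_of_injOn (s := Finset.univ) j (fun ℓ _ => hmaps ℓ) hj.injOn

lemma forall_iff_forall_of_matching {α β : Type*} [DecidableEq α] [DecidableEq β]
    {p : α → Prop} {q : β → Prop} (P : Finset (α × β)) (hP : ∀ e ∈ P, p e.1 ↔ q e.2)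
    (hp : ∀ n ∉ P.image Prod.fst, p n) (hq : ∀ m ∉ P.image Prod.snd, q m) :
    (∀ n, p n) ↔ ∀ m, q m := by
  constructor
  · intro h m
    by_cases hm : m ∈ P.image Prod.snd
    · obtain ⟨e, he, rfl⟩ := Finset.mem_image.1 hm
      exact (hP e he).1 (h e.1)
    · exact hq m hm
  · intro h n
    by_cases hn : n ∈ P.image Prod.fst
    · obtain ⟨e, he, rfl⟩ := Finset.mem_image.1 hn
      exact (hP e he).2 (h e.2)
    · exact hp n hn

structure CoordPartialIso {V W : Set (ℕ → ℝ)} (G : SimpleGraph V) (H : SimpleGraph W) where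
  pairs : Finset (V × W)
  coords : Finset (ℕ × ℕ)
  fst_eq_iff_snd_eq : ∀ p ∈ pairs, ∀ q ∈ pairs, p.1 = q.1 ↔ p.2 = q.2
  adj_iff : ∀ p ∈ pairs, ∀ q ∈ pairs, G.Adj p.1 q.1 ↔ H.Adj p.2 q.2
  coords_fst_eq_iff_snd_eq : ∀ e ∈ coords, ∀ e' ∈ coords, e.1 = e'.1 ↔ e.2 = e'.2
  floor_sub_eq : ∀ p ∈ pairs, ∀ q ∈ pairs, ∀ e ∈ coords,
    ⌊(p.1 : ℕ → ℝ) e.1 - (q.1 : ℕ → ℝ) e.1⌋ = ⌊(p.2 : ℕ → ℝ) e.2 - (q.2 : ℕ → ℝ) e.2⌋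
  floor_eq_fst : ∀ p ∈ pairs, ∀ q ∈ pairs, ∀ n ∉ coords.image Prod.fst,
    ⌊(p.1 : ℕ → ℝ) n⌋ = ⌊(q.1 : ℕ → ℝ) n⌋
  floor_eq_snd : ∀ p ∈ pairs, ∀ q ∈ pairs, ∀ m ∉ coords.image Prod.snd,
    ⌊(p.2 : ℕ → ℝ) m⌋ = ⌊(q.2 : ℕ → ℝ) m⌋

namespace CoordPartialIso

variable {V W : Set (ℕ → ℝ)} {G : SimpleGraph V} {H : SimpleGraph W}

instance : Inhabited (CoordPartialIso G H) :=
  ⟨{ pairs := ∅, coords := ∅, fst_eq_iff_snd_eq := by simp, adj_iff := by simp,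
     coords_fst_eq_iff_snd_eq := by simp, floor_sub_eq := by simp, floor_eq_fst := by simp,
     floor_eq_snd := by simp }⟩

def swap (s : CoordPartialIso G H) : CoordPartialIso H G where
  pairs := s.pairs.map (Equiv.prodComm V W).toEmbedding
  coords := s.coords.image Prod.swap
  fst_eq_iff_snd_eq := by
    simp only [Finset.forall_mem_map]
    exact fun p hp q hq => (s.fst_eq_iff_snd_eq p hp q hq).symm
  adj_iff := by
    simp only [Finset.forall_mem_map]
    exact fun p hp q hq => (s.adj_iff p hp q hq).symm
  coords_fst_eq_iff_snd_eq := by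
    simp only [Finset.forall_mem_image]
    exact fun e he e' he' => (s.coords_fst_eq_iff_snd_eq e he e' he').symm
  floor_sub_eq := by
    simp only [Finset.forall_mem_map, Finset.forall_mem_image]
    exact fun p hp q hq e he => (s.floor_sub_eq p hp q hq e he).symm
  floor_eq_fst := by
    simp only [Finset.forall_mem_map, Finset.image_image]
    exact s.floor_eq_snd
  floor_eq_snd := by
    simp only [Finset.forall_mem_map, Finset.image_image]
    exact s.floor_eq_fst

@[simp]
lemma mem_swap_pairs (s : CoordPartialIso G H) {w : W} {v : V} :
    (w, v) ∈ s.swap.pairs ↔ (v, w) ∈ s.pairs := by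
  simp [swap]

def AgreesOffCoords (s : CoordPartialIso G H) (u : ℕ → ℝ) : Prop :=
  ∀ p ∈ s.pairs, ∀ n ∉ s.coords.image Prod.fst, ⌊u n⌋ = ⌊(p.1 : ℕ → ℝ) n⌋

/-- Requiring the open unit interval, not just equal floors, keeps the floors equal after
negating both differences. -/
def Mirrors (s : CoordPartialIso G H) (u y : ℕ → ℝ) : Prop :=
  (∀ p ∈ s.pairs, ∀ e ∈ s.coords, y e.2 - (p.2 : ℕ → ℝ) e.2 ∈
      Ioo (⌊u e.1 - (p.1 : ℕ → ℝ) e.1⌋ : ℝ) (⌊u e.1 - (p.1 : ℕ → ℝ) e.1⌋ + 1)) ∧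
    ∀ p ∈ s.pairs, ∀ m ∉ s.coords.image Prod.snd, ⌊y m⌋ = ⌊(p.2 : ℕ → ℝ) m⌋

def addCoords (s : CoordPartialIso G H) (Q : Finset (ℕ × ℕ))
    (hfresh : ∀ e ∈ Q, e.1 ∉ s.coords.image Prod.fst ∧ e.2 ∉ s.coords.image Prod.snd)
    (hQ : ∀ e ∈ Q, ∀ e' ∈ Q, e.1 = e'.1 ↔ e.2 = e'.2)
    (hfract : ∀ e ∈ Q, ∀ p ∈ s.pairs, ∀ q ∈ s.pairs,
      Int.fract ((p.1 : ℕ → ℝ) e.1) < Int.fract ((q.1 : ℕ → ℝ) e.1) ↔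
        Int.fract ((p.2 : ℕ → ℝ) e.2) < Int.fract ((q.2 : ℕ → ℝ) e.2)) :
    CoordPartialIso G H where
  pairs := s.pairs
  coords := s.coords ∪ Q
  fst_eq_iff_snd_eq := s.fst_eq_iff_snd_eq
  adj_iff := s.adj_iff
  coords_fst_eq_iff_snd_eq := by
    have distinct : ∀ e ∈ s.coords, ∀ e' ∈ Q, e.1 ≠ e'.1 ∧ e.2 ≠ e'.2 := fun e he e' he' =>
      ⟨fun h => (hfresh e' he').1 (h ▸ Finset.mem_image_of_mem _ he),
        fun h => (hfresh e' he').2 (h ▸ Finset.mem_image_of_mem _ he)⟩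
    intro e he e' he'
    rcases Finset.mem_union.1 he with he | he <;> rcases Finset.mem_union.1 he' with he' | he'
    · exact s.coords_fst_eq_iff_snd_eq e he e' he'
    · exact iff_of_false (distinct e he e' he').1 (distinct e he e' he').2
    · exact iff_of_false (distinct e' he' e he).1.symm (distinct e' he' e he).2.symm
    · exact hQ e he e' he'
  floor_sub_eq p hp q hq e he := by
    rcases Finset.mem_union.1 he with he | he
    · exact s.floor_sub_eq p hp q hq e he
    · exact floor_sub_eq_floor_sub_of_fract_lt_iff (s.floor_eq_fst p hp q hq _ (hfresh e he).1)
        (s.floor_eq_snd p hp q hq _ (hfresh e he).2) (hfract e he p hp q hq)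
  floor_eq_fst p hp q hq n hn := s.floor_eq_fst p hp q hq n fun h =>
    hn (by rw [Finset.image_union]; exact Finset.mem_union_left _ h)
  floor_eq_snd p hp q hq m hm := s.floor_eq_snd p hp q hq m fun h =>
    hm (by rw [Finset.image_union]; exact Finset.mem_union_left _ h)

def insert (s : CoordPartialIso G H) (v : V) (w : W) (hv : ∀ p ∈ s.pairs, p.1 ≠ v)
    (hw : ∀ p ∈ s.pairs, p.2 ≠ w) (hadj : ∀ p ∈ s.pairs, G.Adj v p.1 ↔ H.Adj w p.2)
    (hVidf : ∀ x ∈ V, ∀ y ∈ V, x ≠ y → ∀ n, ∀ k : ℤ, x n - y n ≠ k)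
    (hvs : s.AgreesOffCoords v) (hmir : s.Mirrors v w) : CoordPartialIso G H where
  pairs := Finset.cons (v, w) s.pairs fun h => hv _ h rfl
  coords := s.coords
  fst_eq_iff_snd_eq p hp q hq := by
    rcases Finset.mem_cons.1 hp with rfl | hp <;> rcases Finset.mem_cons.1 hq with rfl | hq
    · exact iff_of_true rfl rfl
    · exact iff_of_false (hv q hq).symm (hw q hq).symm
    · exact iff_of_false (hv p hp) (hw p hp)
    · exact s.fst_eq_iff_snd_eq p hp q hq
  adj_iff p hp q hq := by
    rcases Finset.mem_cons.1 hp with rfl | hp <;> rcases Finset.mem_cons.1 hq with rfl | hq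
    · exact iff_of_false G.irrefl H.irrefl
    · exact hadj q hq
    · rw [G.adj_comm, H.adj_comm]; exact hadj p hp
    · exact s.adj_iff p hp q hq
  coords_fst_eq_iff_snd_eq := s.coords_fst_eq_iff_snd_eq
  floor_sub_eq p hp q hq e he := by
    rcases Finset.mem_cons.1 hp with rfl | hp <;> rcases Finset.mem_cons.1 hq with rfl | hq
    · simp
    · exact (Int.floor_eq_iff.2 ⟨(hmir.1 q hq e he).1.le, (hmir.1 q hq e he).2⟩).symm
    · have hint : (v : ℕ → ℝ) e.1 - (p.1 : ℕ → ℝ) e.1 ∉ range ((↑) : ℤ → ℝ) := by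
        rintro ⟨k, hk⟩
        exact hVidf _ v.2 _ p.1.2 (fun h => hv p hp (Subtype.ext h).symm) e.1 k hk.symm
      rw [← neg_sub, ← neg_sub ((w : ℕ → ℝ) e.2)]
      exact floor_neg_eq_of_mem_Ioo_floor hint (hmir.1 p hp e he)
    · exact s.floor_sub_eq p hp q hq e he
  floor_eq_fst p hp q hq n hn := by
    rcases Finset.mem_cons.1 hp with rfl | hp <;> rcases Finset.mem_cons.1 hq with rfl | hq
    · rfl
    · exact hvs q hq n hn
    · exact (hvs p hp n hn).symm
    · exact s.floor_eq_fst p hp q hq n hn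
  floor_eq_snd p hp q hq m hm := by
    rcases Finset.mem_cons.1 hp with rfl | hp <;> rcases Finset.mem_cons.1 hq with rfl | hq
    · rfl
    · exact hmir.2 q hq m hm
    · exact (hmir.2 p hp m hm).symm
    · exact s.floor_eq_snd p hp q hq m hm

lemma supDist_lt_one_iff_of_mirrors (s : CoordPartialIso G H) {a : ℝ}
    (hVa : ∀ x ∈ V, Tendsto x atTop (𝓝 a)) (hWa : ∀ x ∈ W, Tendsto x atTop (𝓝 a))
    (hVidf : ∀ x ∈ V, ∀ y ∈ V, x ≠ y → ∀ n, ∀ k : ℤ, x n - y n ≠ k)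
    {v : V} (hv : ∀ p ∈ s.pairs, p.1 ≠ v) (hvs : s.AgreesOffCoords v) {y : W}
    (hy : s.Mirrors v y) {p : V × W} (hp : p ∈ s.pairs) :
    supDist v p.1 < 1 ↔ supDist y p.2 < 1 := by
  rw [supDist_lt_iff (hVa _ v.2) (hVa _ p.1.2) one_pos,
    supDist_lt_iff (hWa _ y.2) (hWa _ p.2.2) one_pos]
  refine forall_iff_forall_of_matching s.coords (fun e he => ?_)
    (fun n hn => Int.abs_sub_lt_one_of_floor_eq_floor (hvs p hp n hn))
    (fun m hm => Int.abs_sub_lt_one_of_floor_eq_floor (hy.2 p hp m hm))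
  refine abs_lt_one_iff_of_mem_Ioo_floor (fun h => ?_) (hy.1 p hp e he)
  exact hVidf _ v.2 _ p.1.2 (fun h => hv p hp (Subtype.ext h).symm) e.1 (-1) (by simpa using h)

lemma eq_of_fst_eq (s : CoordPartialIso G H) {p q : V × W} (hp : p ∈ s.pairs)
    (hq : q ∈ s.pairs) (h : p.1 = q.1) : p = q :=
  Prod.ext h ((s.fst_eq_iff_snd_eq p hp q hq).1 h)

lemma eq_of_snd_eq (s : CoordPartialIso G H) {p q : V × W} (hp : p ∈ s.pairs)
    (hq : q ∈ s.pairs) (h : p.2 = q.2) : p = q :=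
  Prod.ext ((s.fst_eq_iff_snd_eq p hp q hq).2 h) h

lemma exists_target_coord (s : CoordPartialIso G H) (u : ℕ → ℝ) (m : ℕ) :
    ∃ ξ, ∃ ρ > 0, ∀ r, |r - ξ| < ρ → ∀ e ∈ s.coords, e.2 = m → ∀ p ∈ s.pairs,
      r - (p.2 : ℕ → ℝ) m ∈
        Ioo (⌊u e.1 - (p.1 : ℕ → ℝ) e.1⌋ : ℝ) (⌊u e.1 - (p.1 : ℕ → ℝ) e.1⌋ + 1) := by
  set l : (ℕ × ℕ) × (V × W) → ℝ := fun ep =>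
    (ep.2.2 : ℕ → ℝ) m + ⌊u ep.1.1 - (ep.2.1 : ℕ → ℝ) ep.1.1⌋
  have hl : ∀ ep ∈ s.coords.filter (·.2 = m) ×ˢ s.pairs,
      ∀ eq ∈ s.coords.filter (·.2 = m) ×ˢ s.pairs, l ep < l eq + 1 := by
    rintro ⟨e, p⟩ hep ⟨e', q⟩ heq
    simp only [Finset.mem_product, Finset.mem_filter] at hep heq
    obtain ⟨⟨he, rfl⟩, hp⟩ := hep
    obtain ⟨⟨he', hee'⟩, hq⟩ := heq
    obtain rfl : e = e' :=
      Prod.ext ((s.coords_fst_eq_iff_snd_eq e he e' he').2 hee'.symm) hee'.symm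
    -- the required cells pairwise overlap: `⌊p - q⌋ + ⌊u - p⌋ ≤ ⌊u - q⌋` on the `V`-side,
    -- and the `W`-side has the same `⌊p - q⌋`
    have hsub := Int.le_floor_add ((p.1 : ℕ → ℝ) e.1 - (q.1 : ℕ → ℝ) e.1)
      (u e.1 - (p.1 : ℕ → ℝ) e.1)
    rw [sub_add_sub_cancel', s.floor_sub_eq p hp q hq e he] at hsub
    have hsub' : ((⌊(p.2 : ℕ → ℝ) e.2 - (q.2 : ℕ → ℝ) e.2⌋ : ℤ) : ℝ) ≤
        ⌊u e.1 - (q.1 : ℕ → ℝ) e.1⌋ - ⌊u e.1 - (p.1 : ℕ → ℝ) e.1⌋ := by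
      exact_mod_cast le_sub_iff_add_le.2 hsub
    have := Int.lt_floor_add_one ((p.2 : ℕ → ℝ) e.2 - (q.2 : ℕ → ℝ) e.2)
    simp only [l]
    linarith
  obtain ⟨ξ, ρ, hρ, hξ⟩ := exists_forall_mem_Ioo_of_lt _ l hl
  refine ⟨ξ, ρ, hρ, fun r hr e he hem p hp => ?_⟩
  have := hξ r hr (e, p) (Finset.mem_product.2 ⟨Finset.mem_filter.2 ⟨he, hem⟩, hp⟩)
  simp only [l, mem_Ioo] at this ⊢
  constructor <;> linarith [this.1, this.2]

lemma exists_target_mirrors (s : CoordPartialIso G H) (u : ℕ → ℝ) {a : ℝ}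
    (ha : ∀ k : ℤ, a ≠ k) {w₀ : ℕ → ℝ} (hw₀ : Tendsto w₀ atTop (𝓝 a))
    (hw₀int : ∀ m, ∀ k : ℤ, w₀ m ≠ k)
    (hw₀s : ∀ p ∈ s.pairs, ∀ m ∉ s.coords.image Prod.snd, ⌊w₀ m⌋ = ⌊(p.2 : ℕ → ℝ) m⌋) :
    ∃ x : ℕ → ℝ, Tendsto x atTop (𝓝 a) ∧
      ∃ ε > 0, ∀ y : ℕ → ℝ, (∀ m, |y m - x m| < ε) → s.Mirrors u y := by
  choose ξ ρ hρ hξ using s.exists_target_coord u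
  obtain ⟨ρ₀, hρ₀, hρ₀w⟩ := exists_pos_floor_eq_of_tendsto hw₀ ha hw₀int
  set M := s.coords.image Prod.snd
  obtain ⟨ε, ⟨hερ₀, hερ⟩, hε⟩ : ∃ ε, (ε < ρ₀ ∧ ∀ m ∈ M, ε < ρ m) ∧ 0 < ε :=
    ((eventually_nhdsWithin_of_eventually_nhds ((eventually_lt_nhds hρ₀).and
      ((eventually_all_finset M).2 fun m _ => eventually_lt_nhds (hρ m)))).and
      eventually_mem_nhdsWithin).exists (f := 𝓝[>] 0)
  refine ⟨fun m => if m ∈ M then ξ m else w₀ m, hw₀.congr' ?_, ε, hε, fun y hy => ⟨?_, ?_⟩⟩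
  · filter_upwards [Nat.cofinite_eq_atTop ▸ M.eventually_cofinite_notMem] with m hm
    simp [hm]
  · intro p hp e he
    have hm : e.2 ∈ M := Finset.mem_image_of_mem _ he
    have hclose : |y e.2 - ξ e.2| < ρ e.2 := by simpa [hm] using (hy e.2).trans (hερ _ hm)
    exact hξ e.2 (y e.2) hclose e he rfl p hp
  · intro p hp m hm
    have hclose : |y m - w₀ m| < ρ₀ := by simpa [M, hm] using (hy m).trans hερ₀
    rw [hρ₀w m (y m) hclose, hw₀s p hp m hm]

lemma exists_agreesOffCoords (s : CoordPartialIso G H) {a : ℝ} (ha : ∀ k : ℤ, a ≠ k)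
    (hVa : ∀ x ∈ V, Tendsto x atTop (𝓝 a))
    (hVidf : ∀ x ∈ V, ∀ y ∈ V, x ≠ y → ∀ n, ∀ k : ℤ, x n - y n ≠ k)
    (hWiop : HasIOPSet W) (v : V) :
    ∃ t : CoordPartialIso G H, t.pairs = s.pairs ∧ t.AgreesOffCoords v := by
  classical
  have hfin := finite_setOf_exists_floor_ne ha (hVa _ v.2) s.pairs fun p _ => hVa _ p.1.2
  set D := hfin.toFinset \ s.coords.image Prod.fst
  have hsnd : Function.Injective fun p : s.pairs => (p.1.2 : ℕ → ℝ) := fun p q h =>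
    Subtype.ext (s.eq_of_snd_eq p.2 q.2 (Subtype.ext h))
  have hfract (n : ℕ) : Function.Injective fun p : s.pairs => Int.fract ((p.1.1 : ℕ → ℝ) n) := by
    intro p q h
    obtain ⟨k, hk⟩ := Int.fract_eq_fract.1 h
    by_contra hpq
    refine hVidf _ p.1.1.2 _ q.1.1.2 (fun h' => hpq ?_) n k hk
    exact Subtype.ext (s.eq_of_fst_eq p.2 q.2 (Subtype.ext h'))
  obtain ⟨μ, hμinj, hμ⟩ := D.exists_injOn_forall_mem _ fun n _ =>
    (hWiop.infinite_setOf_fract_lt_iff _ (fun p => p.1.2.2) hsnd _ (hfract n)).sdiff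
      (s.coords.image Prod.snd).finite_toSet
  refine ⟨s.addCoords (D.image fun n => (n, μ n)) ?_ ?_ ?_, rfl, ?_⟩
  · simp only [Finset.forall_mem_image]
    exact fun n hn => ⟨(Finset.mem_sdiff.1 hn).2, (hμ n hn).2⟩
  · simp only [Finset.forall_mem_image]
    exact fun n hn n' hn' => ⟨congrArg μ, hμinj hn hn'⟩
  · simp only [Finset.forall_mem_image]
    exact fun n hn p hp q hq => (hμ n hn).1 ⟨p, hp⟩ ⟨q, hq⟩
  · intro p hp n hn
    simp only [addCoords, Finset.image_union, Finset.mem_union, not_or, Finset.image_image] at hn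
    by_contra hne
    refine hn.2 (Finset.mem_image.2 ⟨n, Finset.mem_sdiff.2 ⟨?_, hn.1⟩, rfl⟩)
    exact hfin.mem_toFinset.2 ⟨p, hp, hne⟩

lemma exists_mirrors_ball (s : CoordPartialIso G H) {a : ℝ} (ha : ∀ k : ℤ, a ≠ k)
    (hWa : ∀ x ∈ W, Tendsto x atTop (𝓝 a))
    (hWdense : ∀ x : ℕ → ℝ, Tendsto x atTop (𝓝 a) →
      ∀ ε : ℝ, 0 < ε → ∃ w ∈ W, supDist x w < ε)
    (hWint : ∀ x ∈ W, ∀ n, ∀ k : ℤ, x n ≠ k) (u : ℕ → ℝ) :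
    ∃ y : W, ∃ δ > 0, ∀ z : W, supDist y z < δ → s.Mirrors u z := by
  obtain ⟨w₀, hw₀s⟩ : ∃ w₀ : W, ∀ p ∈ s.pairs, ∀ m ∉ s.coords.image Prod.snd,
      ⌊(w₀ : ℕ → ℝ) m⌋ = ⌊(p.2 : ℕ → ℝ) m⌋ := by
    rcases s.pairs.eq_empty_or_nonempty with h | ⟨p₀, hp₀⟩
    · obtain ⟨w, hw, -⟩ := hWdense (fun _ => a) tendsto_const_nhds 1 one_pos
      exact ⟨⟨w, hw⟩, by simp [h]⟩
    · exact ⟨p₀.2, s.floor_eq_snd p₀ hp₀⟩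
  obtain ⟨x, hx, ε, hε, hmir⟩ :=
    s.exists_target_mirrors u ha (hWa _ w₀.2) (hWint _ w₀.2) hw₀s
  obtain ⟨y, hyW, hxy⟩ := hWdense x hx (ε / 2) (half_pos hε)
  refine ⟨⟨y, hyW⟩, ε / 2, half_pos hε, fun z hz => hmir z fun m => ?_⟩
  have hyz : |y m - (z : ℕ → ℝ) m| < ε / 2 :=
    (abs_sub_le_supDist (hWa y hyW) (hWa _ z.2) m).trans_lt hz
  have hxy : |x m - y m| < ε / 2 := (abs_sub_le_supDist hx (hWa y hyW) m).trans_lt hxy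
  rw [abs_sub_comm] at hyz hxy
  linarith [abs_sub_le ((z : ℕ → ℝ) m) (y m) (x m)]

lemma exists_mirror_image (s : CoordPartialIso G H) {a : ℝ} (ha : ∀ k : ℤ, a ≠ k)
    (hVa : ∀ x ∈ V, Tendsto x atTop (𝓝 a)) (hWa : ∀ x ∈ W, Tendsto x atTop (𝓝 a))
    (hWdense : ∀ x : ℕ → ℝ, Tendsto x atTop (𝓝 a) →
      ∀ ε : ℝ, 0 < ε → ∃ w ∈ W, supDist x w < ε)
    (hVidf : ∀ x ∈ V, ∀ y ∈ V, x ≠ y → ∀ n, ∀ k : ℤ, x n - y n ≠ k)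
    (hWint : ∀ x ∈ W, ∀ n, ∀ k : ℤ, x n ≠ k)
    (hGt : Threshold1 G) (hHt : Threshold1 H) (hHgec : GEC H)
    {v : V} (hv : ∀ p ∈ s.pairs, p.1 ≠ v) (hvs : s.AgreesOffCoords v) :
    ∃ w : W, (∀ p ∈ s.pairs, p.2 ≠ w) ∧ (∀ p ∈ s.pairs, G.Adj v p.1 ↔ H.Adj w p.2) ∧
      s.Mirrors v w := by
  classical
  obtain ⟨y, δ, hδ, hball⟩ := s.exists_mirrors_ball ha hWa hWdense hWint v
  have transfer {z : W} (hz : supDist y z < δ) {p} (hp : p ∈ s.pairs) :=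
    s.supDist_lt_one_iff_of_mirrors hVa hWa hVidf hv hvs (hball z hz) hp
  set A := (s.pairs.filter fun p => supDist v p.1 < 1 ∧ G.Adj v p.1).image Prod.snd
  set B := (s.pairs.filter fun p => supDist v p.1 < 1 ∧ ¬ G.Adj v p.1).image Prod.snd
  have hAB : Disjoint A B := by
    simp only [A, B, Finset.disjoint_left, Finset.mem_image, Finset.mem_filter]
    rintro _ ⟨p, ⟨hp, -, hadj⟩, rfl⟩ ⟨q, ⟨hq, -, hnadj⟩, hpq⟩
    exact hnadj (s.eq_of_snd_eq hp hq hpq.symm ▸ hadj)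
  obtain ⟨z, hzA, hzB, -, hzadjA, hzadjB, -, hyz⟩ :=
    hHgec (min δ (1 / 2)) (by positivity) (by linarith [min_le_right δ (1 / 2)]) y A B hAB (by
      simp only [A, B, Finset.mem_image, Finset.mem_filter]
      rintro _ (⟨p, ⟨hp, hnear, -⟩, rfl⟩ | ⟨p, ⟨hp, hnear, -⟩, rfl⟩) <;>
        exact (transfer (by simpa [supDist] using hδ) hp).1 hnear)
  have hyz : supDist y z < δ := hyz.trans_le (min_le_left _ _)
  have mem_A_or_B {p} (hp : p ∈ s.pairs) (hnear : supDist v p.1 < 1) :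
      (G.Adj v p.1 → p.2 ∈ A) ∧ (¬ G.Adj v p.1 → p.2 ∈ B) :=
    ⟨fun h => Finset.mem_image_of_mem _ (Finset.mem_filter.2 ⟨hp, hnear, h⟩),
      fun h => Finset.mem_image_of_mem _ (Finset.mem_filter.2 ⟨hp, hnear, h⟩)⟩
  refine ⟨z, fun p hp hpz => ?_, fun p hp => ?_, hball z hyz⟩
  · have hnear : supDist v p.1 < 1 := (transfer hyz hp).2 (by simp [hpz, supDist])
    by_cases hadj : G.Adj v p.1
    · exact hzA (hpz ▸ (mem_A_or_B hp hnear).1 hadj)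
    · exact hzB (hpz ▸ (mem_A_or_B hp hnear).2 hadj)
  · by_cases hnear : supDist v p.1 < 1
    · by_cases hadj : G.Adj v p.1
      · exact iff_of_true hadj (hzadjA _ ((mem_A_or_B hp hnear).1 hadj))
      · exact iff_of_false hadj (hzadjB _ ((mem_A_or_B hp hnear).2 hadj))
    · exact iff_of_false (fun h => hnear (hGt _ _ h))
        fun h => hnear ((transfer hyz hp).2 (hHt _ _ h))

lemma exists_forth (s : CoordPartialIso G H) {a : ℝ} (ha : ∀ k : ℤ, a ≠ k)
    (hVa : ∀ x ∈ V, Tendsto x atTop (𝓝 a)) (hWa : ∀ x ∈ W, Tendsto x atTop (𝓝 a))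
    (hWdense : ∀ x : ℕ → ℝ, Tendsto x atTop (𝓝 a) →
      ∀ ε : ℝ, 0 < ε → ∃ w ∈ W, supDist x w < ε)
    (hVidf : ∀ x ∈ V, ∀ y ∈ V, x ≠ y → ∀ n, ∀ k : ℤ, x n - y n ≠ k)
    (hWint : ∀ x ∈ W, ∀ n, ∀ k : ℤ, x n ≠ k) (hWiop : HasIOPSet W)
    (hGt : Threshold1 G) (hHt : Threshold1 H) (hHgec : GEC H) (v : V) :
    ∃ t : CoordPartialIso G H, s.pairs ⊆ t.pairs ∧ ∃ w, (v, w) ∈ t.pairs := by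
  by_cases hv : ∃ p ∈ s.pairs, p.1 = v
  · obtain ⟨p, hp, rfl⟩ := hv
    exact ⟨s, subset_rfl, p.2, hp⟩
  push Not at hv
  obtain ⟨t, ht, hvt⟩ := s.exists_agreesOffCoords ha hVa hVidf hWiop v
  rw [← ht] at hv ⊢
  obtain ⟨w, hw, hadj, hmir⟩ :=
    t.exists_mirror_image ha hVa hWa hWdense hVidf hWint hGt hHt hHgec hv hvt
  refine ⟨t.insert v w hv hw hadj hVidf hvt hmir, fun p hp => ?_, w, ?_⟩
  · simp [insert, hp]
  · simp [insert]

end CoordPartialIso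

/-- for `a ∈ (0,1)`, any two g.e.c. geometric 1-graphs on dense countable
i.d.f. subsets of `c_a` satisfying the independent order property are isomorphic. -/
theorem iso_of_gec_geometric_one_graphs_cA
    (a : ℝ) (ha : a ∈ Set.Ioo (0 : ℝ) 1)
    (V W : Set (ℕ → ℝ)) (hVc : V.Countable) (hWc : W.Countable)
    (hVsub : ∀ x ∈ V, Tendsto x atTop (nhds a))
    (hWsub : ∀ x ∈ W, Tendsto x atTop (nhds a))
    (hVdense : ∀ x : ℕ → ℝ, Tendsto x atTop (nhds a) →
      ∀ ε : ℝ, 0 < ε → ∃ v ∈ V, supDist x v < ε)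
    (hWdense : ∀ x : ℕ → ℝ, Tendsto x atTop (nhds a) →
      ∀ ε : ℝ, 0 < ε → ∃ w ∈ W, supDist x w < ε)
    (hVidf : IDFSetA V) (hWidf : IDFSetA W)
    (hViop : HasIOPSet V) (hWiop : HasIOPSet W)
    (G : SimpleGraph V) (H : SimpleGraph W)
    (hGt : Threshold1 G) (hHt : Threshold1 H)
    (hGgec : GEC G) (hHgec : GEC H) :
    Nonempty (G ≃g H) := by
  have : Countable V := hVc.to_subtype
  have : Countable W := hWc.to_subtype
  have ha' (k : ℤ) : a ≠ k := by
    rintro rfl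
    have h0 : (0 : ℤ) < k := by exact_mod_cast ha.1
    have h1 : k < 1 := by exact_mod_cast ha.2
    omega
  obtain ⟨e, he⟩ := exists_equiv_of_back_and_forth (ι := CoordPartialIso G H)
    (fun s v w => (v, w) ∈ s.pairs)
    (fun s _ _ _ h h' => by simpa using (s.fst_eq_iff_snd_eq _ h _ h').1 rfl)
    (fun s _ _ _ h h' => (s.fst_eq_iff_snd_eq _ h _ h').2 rfl)
    (fun s v => (s.exists_forth ha' hVsub hWsub hWdense hVidf.2 hWidf.1 hWiop hGt hHt hHgec
      v).imp fun t ht => ⟨fun _ _ h => ht.1 h, ht.2⟩)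
    (fun s w => by
      obtain ⟨t, hst, v, hv⟩ := s.swap.exists_forth ha' hWsub hVsub hVdense hWidf.2 hVidf.1
        hViop hHt hGt hGgec w
      exact ⟨t.swap, fun _ _ h => by simpa using hst (s.mem_swap_pairs.2 h), v, by simpa using hv⟩)
  refine ⟨⟨e, fun {v v'} => ?_⟩⟩
  obtain ⟨s, h, h'⟩ := he v v'
  exact (s.adj_iff _ h _ h').symm
end

section
/- The Banach spaces c (convergent real sequences) and c_0 (sequences converging to 0), both with the sup norm, are not linearly isometrically isomorphic. -/
open scoped ZeroAtInfty

open Filter ZeroAtInftyContinuousMap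

noncomputable def myBump (n : ℕ) : C₀(ℕ, ℝ) :=
  ⟨⟨fun m => if m = n then (1/2 : ℝ) else 0, continuous_of_discreteTopology⟩, by
    refine Filter.Tendsto.congr' ?_ tendsto_const_nhds
    filter_upwards [Filter.mem_cocompact.mpr ⟨{n}, isCompact_singleton, le_refl _⟩] with m hm
    simp only [Set.mem_compl_iff, Set.mem_singleton_iff] at hm
    simp [hm]⟩

lemma myBump_apply_self (n : ℕ) : myBump n n = 1/2 := if_pos rfl

lemma myBump_apply_ne {n m : ℕ} (h : m ≠ n) : myBump n m = 0 := if_neg h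

/-- the Banach spaces `c` (convergent real sequences, realized as continuous
functions on the one-point compactification of `ℕ`, with the sup norm) and `c₀` (sequences
vanishing at infinity, with the sup norm) are not linearly isometrically isomorphic. -/
theorem c_not_isometric_c0 : IsEmpty (C(OnePoint ℕ, ℝ) ≃ₗᵢ[ℝ] C₀(ℕ, ℝ)) := by
  constructor
  intro e
  set y : C₀(ℕ, ℝ) := e (1 : C(OnePoint ℕ, ℝ)) with hy
  have hynorm : ‖y‖ = 1 := by
    rw [hy, e.norm_map]; exact norm_one
  -- pointwise bound on y
  have hyb : ∀ m, |y m| ≤ 1 := by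
    intro m
    have := y.toBCF.norm_coe_le_norm m
    rw [norm_toBCF_eq_norm, hynorm] at this
    simpa using this
  -- find n with |y n| ≤ 1/2
  obtain ⟨n, hn⟩ : ∃ n, |y n| ≤ 1/2 := by
    have h := zero_at_infty y
    have : ∀ᶠ m in cocompact ℕ, dist (y m) 0 < 1/2 :=
      Metric.tendsto_nhds.mp h (1/2) (by norm_num)
    obtain ⟨m, hm⟩ := this.exists
    exact ⟨m, by rw [Real.dist_eq, sub_zero] at hm; exact hm.le⟩
  set g : C₀(ℕ, ℝ) := y + myBump n with hg
  set h : C₀(ℕ, ℝ) := y - myBump n with hh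
  have hbound : ∀ (f : C₀(ℕ, ℝ)), (∀ m, |f m| ≤ 1) → ‖f‖ ≤ 1 := by
    intro f hf
    rw [← norm_toBCF_eq_norm]
    exact BoundedContinuousFunction.norm_le (by norm_num) |>.mpr (fun m => by simpa using hf m)
  have hgnorm : ‖g‖ ≤ 1 := by
    refine hbound g fun m => ?_
    rcases eq_or_ne m n with rfl | hmn
    · simp only [hg, ZeroAtInftyContinuousMap.add_apply, myBump_apply_self]
      have := hn
      rw [abs_le] at this ⊢
      constructor <;> linarith [this.1, this.2]
    · simp only [hg, ZeroAtInftyContinuousMap.add_apply, myBump_apply_ne hmn, add_zero]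
      exact hyb m
  have hhnorm : ‖h‖ ≤ 1 := by
    refine hbound h fun m => ?_
    rcases eq_or_ne m n with rfl | hmn
    · simp only [hh, ZeroAtInftyContinuousMap.sub_apply, myBump_apply_self]
      have := hn
      rw [abs_le] at this ⊢
      constructor <;> linarith [this.1, this.2]
    · simp only [hh, ZeroAtInftyContinuousMap.sub_apply, myBump_apply_ne hmn, sub_zero]
      exact hyb m
  set a : C(OnePoint ℕ, ℝ) := e.symm g with ha
  set b : C(OnePoint ℕ, ℝ) := e.symm h with hb
  have hanorm : ‖a‖ ≤ 1 := by rw [ha, e.symm.norm_map]; exact hgnorm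
  have hbnorm : ‖b‖ ≤ 1 := by rw [hb, e.symm.norm_map]; exact hhnorm
  have hab : a + b = (2 : ℝ) • (1 : C(OnePoint ℕ, ℝ)) := by
    rw [ha, hb, ← map_add]
    have : g + h = (2 : ℝ) • y := by
      rw [hg, hh]; ring_nf; module
    rw [this, map_smul, hy, e.symm_apply_apply]
  -- a = b pointwise
  have haeq : a = b := by
    ext x
    have hax : |a x| ≤ 1 := by
      have := a.norm_coe_le_norm x
      simpa using this.trans hanorm
    have hbx : |b x| ≤ 1 := by
      have := b.norm_coe_le_norm x
      simpa using this.trans hbnorm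
    have hsum : a x + b x = 2 := by
      have := congrFun (congrArg DFunLike.coe hab) x
      simpa using this
    rw [abs_le] at hax hbx
    linarith [hax.1, hax.2, hbx.1, hbx.2]
  have : g = h := by
    have := congrArg e (congrArg id haeq)
    simp only [id] at this
    rw [ha, hb, e.apply_symm_apply, e.apply_symm_apply] at this
    exact this
  have hcontra := congrFun (congrArg DFunLike.coe this) n
  simp only [hg, hh, ZeroAtInftyContinuousMap.add_apply, ZeroAtInftyContinuousMap.sub_apply,
    myBump_apply_self] at hcontra
  linarith
end
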